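/- arXiv:1512.04689 — 10 statements merged into one kernel-verified Lean document; each statement's English description precedes it below -/
import Mathlib

section
/- Let E, A be q×n real matrices, B a q×m real matrix, and G a q×s real matrix. Let G^⊥ be a matrix of maximal rank with G^⊥·G = 0 (i.e., the rows of G^⊥ span the left annihilator of G). Then a subspace V ⊆ ℝⁿ satisfies A·V ⊆ E·V + Im G and Im B ⊆ E·V + Im G if and only if it satisfies (G^⊥A)·V ⊆ (G^⊥E)·V and Im(G^⊥B) ⊆ (G^⊥E)·V. In particular the consistent subspaces of the system E·ẋ = A·x + B·u + G·d and of the disturbance-free system G^⊥E·ẋ = G^⊥A·x + G^⊥B·u coincide. -/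
theorem Submodule.le_sup_ker_iff_map_le_map {R M N : Type*} [Ring R] [AddCommGroup M]
    [AddCommGroup N] [Module R M] [Module R N] (f : M →ₗ[R] N) (X W : Submodule R M) :
    X ≤ W ⊔ LinearMap.ker f ↔ X.map f ≤ W.map f := by
  rw [← Submodule.comap_map_eq, Submodule.map_le_iff_le_comap]

/-- elimination of disturbances via a maximal-rank left annihilator `G^⊥`
of `G` (i.e. `ker G^⊥ = Im G`): a subspace satisfies the consistency conditions of
`E ẋ = A x + B u + G d` iff it satisfies those of `G^⊥E ẋ = G^⊥A x + G^⊥B u`. -/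
theorem stmt_1 (q n m s r : ℕ)
    (E A : Matrix (Fin q) (Fin n) ℝ) (B : Matrix (Fin q) (Fin m) ℝ)
    (G : Matrix (Fin q) (Fin s) ℝ) (Gperp : Matrix (Fin r) (Fin q) ℝ)
    (hker : LinearMap.ker Gperp.mulVecLin = LinearMap.range G.mulVecLin)
    (V : Submodule ℝ (Fin n → ℝ)) :
    (Submodule.map A.mulVecLin V ≤ Submodule.map E.mulVecLin V ⊔ LinearMap.range G.mulVecLin ∧
     LinearMap.range B.mulVecLin ≤ Submodule.map E.mulVecLin V ⊔ LinearMap.range G.mulVecLin) ↔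
    (Submodule.map (Gperp * A).mulVecLin V ≤ Submodule.map (Gperp * E).mulVecLin V ∧
     LinearMap.range (Gperp * B).mulVecLin ≤ Submodule.map (Gperp * E).mulVecLin V) := by
  simp only [← hker, Submodule.le_sup_ker_iff_map_le_map, Matrix.mulVecLin_mul,
    Submodule.map_comp, LinearMap.range_comp]
end

section
/- Let E, A be real q×n matrices. The matrix pencil sE − A is regular (i.e., det(sE − A) is not the identically zero polynomial, assuming q = n) if and only if V₀* ∩ ker E = {0}, where V₀* is the maximal subspace V of ℝⁿ satisfying A·V ⊆ E·V. -/
/-!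
If `det (sE - A)` is a nonzero polynomial, it does not vanish at some real `s`. Then `sE - A` is
injective and maps `V₀*` into `E·V₀*`, so `dim V₀* ≤ dim E·V₀*` and `E` is injective on `V₀*`.

Conversely, a nonzero polynomial vector `w = ∑ zₖ Xᵏ` with `(XE - A) w = 0` gives a chain
`A z₀ = 0`, `E zₖ = A zₖ₊₁`. The span `V` of the `zₖ` satisfies `A·V ⊆ E·V`, hence lies in `V₀*`,
and the last nonzero `zₖ` lies in `ker E`.
-/

open Polynomial Matrix

theorem Submodule.disjoint_ker_of_map_le_map {K M N : Type*} [DivisionRing K]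
    [AddCommGroup M] [Module K M] [AddCommGroup N] [Module K N] {L : Submodule K M}
    [FiniteDimensional K L] {f g : M →ₗ[K] N} (hg : Function.Injective g)
    (h : L.map g ≤ L.map f) : Disjoint L (LinearMap.ker f) :=
  L.disjoint_ker_of_finrank_le f <|
    (Submodule.equivMapOfInjective g hg L).finrank_eq.trans_le (Submodule.finrank_mono h)

theorem Submodule.map_smul_sub_le_map {R M N : Type*} [CommRing R]
    [AddCommGroup M] [Module R M] [AddCommGroup N] [Module R N] {L : Submodule R M}
    {f g : M →ₗ[R] N} (h : L.map g ≤ L.map f) (s : R) : L.map (s • f - g) ≤ L.map f := by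
  rintro _ ⟨u, hu, rfl⟩
  obtain ⟨v, hv, hgu⟩ := h ⟨u, hu, rfl⟩
  exact ⟨s • u - v, L.sub_mem (L.smul_mem s hu) hv, by simp [hgu]⟩

theorem Submodule.map_span_range_le_map_of_chain {R M N : Type*} [Semiring R]
    [AddCommMonoid M] [Module R M] [AddCommMonoid N] [Module R N] {f g : M →ₗ[R] N}
    {z : ℕ → M} (h₀ : g (z 0) = 0) (hsucc : ∀ k, f (z k) = g (z (k + 1))) :
    (span R (Set.range z)).map g ≤ (span R (Set.range z)).map f := by
  rw [Submodule.map_span, Submodule.span_le]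
  rintro _ ⟨_, ⟨k, rfl⟩, rfl⟩
  cases k with
  | zero => exact h₀ ▸ zero_mem _
  | succ k => exact ⟨z k, subset_span ⟨k, rfl⟩, hsucc k⟩

theorem Nat.forall_of_eventually_of_succ {P : ℕ → Prop} (hP : ∀ᶠ k in Filter.atTop, P k)
    (hstep : ∀ k, P (k + 1) → P k) (k : ℕ) : P k := by
  obtain ⟨N, hN⟩ := Filter.eventually_atTop.mp hP
  exact Nat.decreasingInduction (motive := fun j _ => P j) (fun j _ => hstep j)
    (hN _ (le_max_right k N)) (le_max_left k N)

namespace Matrix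

theorem coeff_map_C_mulVec {m ι R : Type*} [Fintype ι] [CommSemiring R] (M : Matrix m ι R)
    (w : ι → R[X]) (k : ℕ) (i : m) :
    ((M.map C *ᵥ w) i).coeff k = (M *ᵥ fun j => (w j).coeff k) i := by
  simp [mulVec, dotProduct]

variable {ι K : Type*} [Fintype ι] [DecidableEq ι] [Field K]

theorem eval_det_pencil (E A : Matrix ι ι K) (s : K) :
    ((X : K[X]) • E.map C - A.map C).det.eval s = (s • E - A).det := by
  rw [← coe_evalRingHom, RingHom.map_det]
  congr 1
  ext i j
  simp only [RingHom.mapMatrix_apply, map_apply, sub_apply, smul_apply, smul_eq_mul,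
    coe_evalRingHom, eval_sub, eval_mul, eval_X, eval_C]

theorem inf_ker_eq_bot_of_det_pencil_ne_zero [Infinite K] {E A : Matrix ι ι K}
    (hdet : ((X : K[X]) • E.map C - A.map C).det ≠ 0) {U : Submodule K (ι → K)}
    (hU : U.map A.mulVecLin ≤ U.map E.mulVecLin) : U ⊓ LinearMap.ker E.mulVecLin = ⊥ := by
  obtain ⟨s, hs⟩ : ∃ s : K, (s • E - A).det ≠ 0 := by
    simp_rw [← eval_det_pencil]
    exact not_forall.mp fun h => hdet (zero_of_eval_zero _ h)
  have hinj : Function.Injective (s • E.mulVecLin - A.mulVecLin) := by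
    have hlin : s • E.mulVecLin - A.mulVecLin = (s • E - A).mulVecLin := by
      ext v
      simp
    rw [hlin, ← LinearMap.ker_eq_bot, ker_mulVecLin_eq_bot_iff]
    intro v hv
    by_contra hv0
    exact hs (exists_mulVec_eq_zero_iff.mp ⟨v, hv0, hv⟩)
  exact disjoint_iff.mp
    (Submodule.disjoint_ker_of_map_le_map hinj (Submodule.map_smul_sub_le_map hU s))

theorem det_pencil_ne_zero_of_inf_ker_eq_bot {E A : Matrix ι ι K} {V : Submodule K (ι → K)}
    (hmax : ∀ U : Submodule K (ι → K), U.map A.mulVecLin ≤ U.map E.mulVecLin → U ≤ V)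
    (hV : V ⊓ LinearMap.ker E.mulVecLin = ⊥) :
    ((X : K[X]) • E.map C - A.map C).det ≠ 0 := by
  intro hdet
  obtain ⟨w, hw0, hw⟩ := exists_mulVec_eq_zero_iff.mpr hdet
  set z : ℕ → ι → K := fun k j => (w j).coeff k
  have hz0 : A *ᵥ z 0 = 0 := by
    ext i
    simpa [sub_mulVec, smul_mulVec, coeff_map_C_mulVec] using
      congr_arg (coeff · 0) (congr_fun hw i)
  have hzsucc : ∀ k, E *ᵥ z k = A *ᵥ z (k + 1) := by
    intro k
    ext i
    simpa [sub_mulVec, smul_mulVec, coeff_map_C_mulVec, sub_eq_zero] using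
      congr_arg (coeff · (k + 1)) (congr_fun hw i)
  have hzV : ∀ k, z k ∈ V := fun k =>
    hmax _ (Submodule.map_span_range_le_map_of_chain hz0 hzsucc) (Submodule.subset_span ⟨k, rfl⟩)
  have hz_eventually : ∀ᶠ k in Filter.atTop, z k = 0 := by
    refine (Filter.eventually_all.mpr fun j => ?_).mono fun k hk => funext hk
    exact (Filter.eventually_gt_atTop (w j).natDegree).mono
      fun k hk => coeff_eq_zero_of_natDegree_lt hk
  have hz : ∀ k, z k = 0 := Nat.forall_of_eventually_of_succ hz_eventually fun k hk => by
    have hzk : z k ∈ V ⊓ LinearMap.ker E.mulVecLin := ⟨hzV k, by simp [hzsucc, hk]⟩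
    simpa [hV] using hzk
  exact hw0 (funext fun j => Polynomial.ext fun k => congr_fun (hz k) j)

end Matrix

/-- the pencil `sE - A` is regular (its determinant is not the zero
polynomial) iff `V₀* ∩ ker E = {0}`, where `V₀*` is the maximal subspace `V`
with `A·V ⊆ E·V`. -/
theorem stmt_2 (n : ℕ) (E A : Matrix (Fin n) (Fin n) ℝ)
    (V0 : Submodule ℝ (Fin n → ℝ))
    (hV0 : Submodule.map A.mulVecLin V0 ≤ Submodule.map E.mulVecLin V0)
    (hmax : ∀ V : Submodule ℝ (Fin n → ℝ),
      Submodule.map A.mulVecLin V ≤ Submodule.map E.mulVecLin V → V ≤ V0) :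
    ((Polynomial.X : Polynomial ℝ) • E.map Polynomial.C - A.map Polynomial.C).det ≠ 0 ↔
      V0 ⊓ LinearMap.ker E.mulVecLin = ⊥ :=
  ⟨fun hdet => Matrix.inf_ker_eq_bot_of_det_pencil_ne_zero hdet hV0,
    Matrix.det_pencil_ne_zero_of_inf_ker_eq_bot hmax⟩
end

section
/- Let E, A ∈ ℝ^{n×n} and suppose V₀* ∩ ker E ≠ {0}, where V₀* is the maximal subspace with A·V₀* ⊆ E·V₀*. Then (assuming q = n) the polynomial det(sE − A) is identically zero. -/
/-!
For every real `s`, the map `sE - A` sends `V₀*` into `E·V₀*`, which has strictly smaller dimension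
than `V₀*` because `E` kills a nonzero vector of `V₀*`. Hence `sE - A` has a nonzero kernel vector in
`V₀*`, so `det(sE - A)` vanishes at every real `s` and is therefore the zero polynomial.
-/

open Module Polynomial

theorem Submodule.finrank_map_lt_iff_not_disjoint_ker {K M N : Type*} [DivisionRing K]
    [AddCommGroup M] [Module K M] [AddCommGroup N] [Module K N] (f : M →ₗ[K] N)
    {V : Submodule K M} [FiniteDimensional K V] :
    finrank K (V.map f) < finrank K V ↔ ¬Disjoint V (LinearMap.ker f) := by
  rw [← LinearMap.injective_domRestrict_iff, ← LinearMap.range_domRestrict]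
  have rank_nullity := LinearMap.finrank_range_add_finrank_ker (f.domRestrict V)
  constructor
  · exact fun hlt hinj => hlt.ne (LinearMap.finrank_range_of_inj hinj)
  · intro hinj
    have : 0 < finrank K (LinearMap.ker (f.domRestrict V)) := by
      rw [finrank_pos_iff, Submodule.nontrivial_iff_ne_bot, Ne, LinearMap.ker_eq_bot]
      exact hinj
    omega

theorem Submodule.map_smul_sub_le {R M N : Type*} [CommRing R] [AddCommGroup M] [Module R M]
    [AddCommGroup N] [Module R N] {f g : M →ₗ[R] N} {V : Submodule R M}
    (h : V.map g ≤ V.map f) (s : R) : V.map (s • f - g) ≤ V.map f := by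
  rintro _ ⟨x, hx, rfl⟩
  exact (V.map f).sub_mem ((V.map f).smul_mem s ⟨x, hx, rfl⟩) (h ⟨x, hx, rfl⟩)

theorem Matrix.eval_det_X_smul_sub {n R : Type*} [Fintype n] [DecidableEq n] [CommRing R]
    (E A : Matrix n n R) (s : R) :
    ((X : R[X]) • E.map C - A.map C).det.eval s = (s • E - A).det := by
  rw [← coe_evalRingHom, RingHom.map_det]
  congr 1
  ext i j
  simp only [RingHom.mapMatrix_apply, Matrix.map_apply, Matrix.sub_apply, Matrix.smul_apply,
    smul_eq_mul, map_sub, coe_evalRingHom, eval_mul, eval_X, eval_C]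

theorem stmt_3_general (n : ℕ) (E A : Matrix (Fin n) (Fin n) ℝ)
    (V0 : Submodule ℝ (Fin n → ℝ))
    (hV0 : Submodule.map A.mulVecLin V0 ≤ Submodule.map E.mulVecLin V0)
    (hne : V0 ⊓ LinearMap.ker E.mulVecLin ≠ ⊥) :
    ((Polynomial.X : Polynomial ℝ) • E.map Polynomial.C - A.map Polynomial.C).det = 0 := by
  refine Polynomial.funext fun s => ?_
  rw [Matrix.eval_det_X_smul_sub, eval_zero, ← Matrix.exists_mulVec_eq_zero_iff]
  have hmap : V0.map (s • E - A).mulVecLin ≤ V0.map E.mulVecLin := by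
    simpa using Submodule.map_smul_sub_le hV0 s
  have hlt : finrank ℝ (V0.map (s • E - A).mulVecLin) < finrank ℝ V0 :=
    (Submodule.finrank_mono hmap).trans_lt
      ((Submodule.finrank_map_lt_iff_not_disjoint_ker _).mpr (mt disjoint_iff.mp hne))
  obtain ⟨x, ⟨-, hx⟩, hx0⟩ := Submodule.exists_mem_ne_zero_of_ne_bot
    (mt disjoint_iff.mpr ((Submodule.finrank_map_lt_iff_not_disjoint_ker _).mp hlt))
  exact ⟨x, hx0, hx⟩

/-- if `V₀* ∩ ker E ≠ {0}`, where `V₀*` is the maximal subspace with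
`A·V₀* ⊆ E·V₀*`, then `det(sE - A)` is the zero polynomial. -/
theorem stmt_3 (n : ℕ) (E A : Matrix (Fin n) (Fin n) ℝ)
    (V0 : Submodule ℝ (Fin n → ℝ))
    (hV0 : Submodule.map A.mulVecLin V0 ≤ Submodule.map E.mulVecLin V0)
    (hmax : ∀ V : Submodule ℝ (Fin n → ℝ),
      Submodule.map A.mulVecLin V ≤ Submodule.map E.mulVecLin V → V ≤ V0)
    (hne : V0 ⊓ LinearMap.ker E.mulVecLin ≠ ⊥) :
    ((Polynomial.X : Polynomial ℝ) • E.map Polynomial.C - A.map Polynomial.C).det = 0 :=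
  stmt_3_general n E A V0 hV0 hne
end

section
/- Let R ⊆ X₁ × X₂ be a subspace satisfying the algebraic bisimulation conditions: (a) R + (E₁⁻¹(Im G₁) ∩ V₁*) × {0} = R + {0} × (E₂⁻¹(Im G₂) ∩ V₂*), (b) [A₁ 0; 0 A₂]·R ⊆ [E₁ 0; 0 E₂]·R + Im[G₁ 0; 0 G₂], and (c) Im[B₁; B₂] ⊆ [E₁ 0; 0 E₂]·R + Im[G₁ 0; 0 G₂]. Then for every (x₁, x₂) ∈ R, every u ∈ U, and every f₁ ∈ V₁*, d₁ ∈ D₁ with E₁f₁ = A₁x₁ + B₁u + G₁d₁, there exist f₂ ∈ V₂* and d₂ ∈ D₂ with E₂f₂ = A₂x₂ + B₂u + G₂d₂ and (f₁, f₂) ∈ R. -/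
/-!
Conditions (b) and (c) say that `R` is a consistent subspace of the product system, so its
projections onto `X₁` and `X₂` are consistent for `Σ₁` and `Σ₂` and, by maximality, lie in `V₁*`
and `V₂*`. Given `(x₁, x₂) ∈ R` and `u`, consistency of `R` gives `(p₁, p₂) ∈ R` with
`Aᵢxᵢ + Bᵢu ∈ Eᵢpᵢ + Im Gᵢ`. Then `f₁ - p₁` lies in `E₁⁻¹(Im G₁) ∩ V₁*`, so condition (a)
yields `z ∈ E₂⁻¹(Im G₂) ∩ V₂*` with `(f₁ - p₁, z) ∈ R`, and `f₂ = p₂ + z` is the required successor.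
-/

open Submodule LinearMap

section

variable {K X Z U D X' Z' D' : Type*} [Ring K]
  [AddCommGroup X] [Module K X] [AddCommGroup Z] [Module K Z] [AddCommGroup U] [Module K U]
  [AddCommGroup D] [Module K D] [AddCommGroup X'] [Module K X'] [AddCommGroup Z'] [Module K Z']
  [AddCommGroup D'] [Module K D']

/-- `V` is a consistent subspace of the descriptor system `E ẋ = A x + B u + G d`. -/
def IsConsistent (E A : X →ₗ[K] Z) (B : U →ₗ[K] Z) (G : D →ₗ[K] Z) (V : Submodule K X) : Prop :=
  V.map A ≤ V.map E ⊔ range G ∧ range B ≤ V.map E ⊔ range G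

theorem IsConsistent.exists_add_eq {E A : X →ₗ[K] Z} {B : U →ₗ[K] Z} {G : D →ₗ[K] Z}
    {V : Submodule K X} (hV : IsConsistent E A B G V) {x : X} (hx : x ∈ V) (u : U) :
    ∃ p ∈ V, ∃ e, A x + B u = E p + G e := by
  have hA : A x ∈ V.map E ⊔ range G := hV.1 (mem_map_of_mem hx)
  have hB : B u ∈ V.map E ⊔ range G := hV.2 (mem_range_self B u)
  obtain ⟨_, ⟨p, hp, rfl⟩, _, ⟨e, rfl⟩, h⟩ := mem_sup.1 (add_mem hA hB)
  exact ⟨p, hp, e, h.symm⟩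

theorem IsConsistent.map {E A : X →ₗ[K] Z} {B : U →ₗ[K] Z} {G : D →ₗ[K] Z}
    {E' A' : X' →ₗ[K] Z'} {B' : U →ₗ[K] Z'} {G' : D' →ₗ[K] Z'} {V : Submodule K X}
    (hV : IsConsistent E A B G V) (π : X →ₗ[K] X') (ρ : Z →ₗ[K] Z')
    (hE : ρ ∘ₗ E = E' ∘ₗ π) (hA : ρ ∘ₗ A = A' ∘ₗ π) (hB : ρ ∘ₗ B = B')
    (hG : range (ρ ∘ₗ G) ≤ range G') :
    IsConsistent E' A' B' G' (V.map π) := by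
  have himage : (V.map E ⊔ range G).map ρ ≤ (V.map π).map E' ⊔ range G' := by
    rw [Submodule.map_sup, ← map_comp, hE, map_comp, ← range_comp]
    exact sup_le_sup_left hG _
  constructor
  · calc (V.map π).map A' = (V.map A).map ρ := by rw [← map_comp, ← map_comp, hA]
      _ ≤ _ := (map_mono hV.1).trans himage
  · calc range B' = (range B).map ρ := by rw [← hB, range_comp]
      _ ≤ _ := (map_mono hV.2).trans himage

end

section

variable {K X₁ X₂ Z₁ Z₂ U D₁ D₂ : Type*} [Ring K]
  [AddCommGroup X₁] [Module K X₁] [AddCommGroup X₂] [Module K X₂]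
  [AddCommGroup Z₁] [Module K Z₁] [AddCommGroup Z₂] [Module K Z₂] [AddCommGroup U] [Module K U]
  [AddCommGroup D₁] [Module K D₁] [AddCommGroup D₂] [Module K D₂]
  {E₁ A₁ : X₁ →ₗ[K] Z₁} {B₁ : U →ₗ[K] Z₁} {G₁ : D₁ →ₗ[K] Z₁}
  {E₂ A₂ : X₂ →ₗ[K] Z₂} {B₂ : U →ₗ[K] Z₂} {G₂ : D₂ →ₗ[K] Z₂}
  {R : Submodule K (X₁ × X₂)}

theorem IsConsistent.map_fst
    (hR : IsConsistent (E₁.prodMap E₂) (A₁.prodMap A₂) (B₁.prod B₂) (G₁.prodMap G₂) R) :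
    IsConsistent E₁ A₁ B₁ G₁ (R.map (fst K X₁ X₂)) :=
  hR.map _ (fst K Z₁ Z₂) rfl rfl rfl (range_comp_le_range (fst K D₁ D₂) G₁)

theorem IsConsistent.map_snd
    (hR : IsConsistent (E₁.prodMap E₂) (A₁.prodMap A₂) (B₁.prod B₂) (G₁.prodMap G₂) R) :
    IsConsistent E₂ A₂ B₂ G₂ (R.map (snd K X₁ X₂)) :=
  hR.map _ (snd K Z₁ Z₂) rfl rfl rfl (range_comp_le_range (snd K D₁ D₂) G₂)

theorem exists_mem_of_sup_prod_eq {N₁ : Submodule K X₁} {N₂ : Submodule K X₂}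
    (h : R ⊔ N₁.prod ⊥ = R ⊔ (⊥ : Submodule K X₁).prod N₂) {y : X₁} (hy : y ∈ N₁) :
    ∃ z ∈ N₂, (y, z) ∈ R := by
  have hy0 : (y, (0 : X₂)) ∈ R ⊔ (⊥ : Submodule K X₁).prod N₂ :=
    h ▸ mem_sup_right ⟨hy, zero_mem _⟩
  obtain ⟨r, hr, n, ⟨hn₁, hn₂⟩, hrn⟩ := mem_sup.1 hy0
  have hn₁ : n.1 = 0 := (mem_bot K).1 hn₁
  refine ⟨-n.2, neg_mem hn₂, ?_⟩
  convert hr using 1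
  ext
  · simpa [hn₁] using (congrArg Prod.fst hrn).symm
  · exact (eq_neg_of_add_eq_zero_left (congrArg Prod.snd hrn)).symm

theorem exists_bisimulation_step {V₁ : Submodule K X₁} {V₂ : Submodule K X₂}
    (hR : IsConsistent (E₁.prodMap E₂) (A₁.prodMap A₂) (B₁.prod B₂) (G₁.prodMap G₂) R)
    (hRV₁ : R.map (fst K X₁ X₂) ≤ V₁) (hRV₂ : R.map (snd K X₁ X₂) ≤ V₂)
    (ha : R ⊔ (comap E₁ (range G₁) ⊓ V₁).prod ⊥ = R ⊔ (⊥ : Submodule K X₁).prod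
      (comap E₂ (range G₂) ⊓ V₂))
    {x₁ : X₁} {x₂ : X₂} (hx : (x₁, x₂) ∈ R) (u : U) {f₁ : X₁} (hf₁ : f₁ ∈ V₁) {d₁ : D₁}
    (hf₁d₁ : E₁ f₁ = A₁ x₁ + B₁ u + G₁ d₁) :
    ∃ f₂ ∈ V₂, ∃ d₂, E₂ f₂ = A₂ x₂ + B₂ u + G₂ d₂ ∧ (f₁, f₂) ∈ R := by
  obtain ⟨⟨p₁, p₂⟩, hp, ⟨e₁, e₂⟩, hpe⟩ := hR.exists_add_eq hx u
  have hpe₁ : A₁ x₁ + B₁ u = E₁ p₁ + G₁ e₁ := congrArg Prod.fst hpe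
  have hpe₂ : A₂ x₂ + B₂ u = E₂ p₂ + G₂ e₂ := congrArg Prod.snd hpe
  have hp₁ : p₁ ∈ V₁ := hRV₁ (mem_map_of_mem hp)
  have hp₂ : p₂ ∈ V₂ := hRV₂ (mem_map_of_mem hp)
  have hfp : f₁ - p₁ ∈ comap E₁ (range G₁) ⊓ V₁ := by
    refine ⟨⟨d₁ + e₁, ?_⟩, sub_mem hf₁ hp₁⟩
    rw [map_sub, hf₁d₁, map_add, hpe₁]
    abel
  obtain ⟨z, ⟨⟨c, hc⟩, hz⟩, hzR⟩ := exists_mem_of_sup_prod_eq ha hfp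
  refine ⟨p₂ + z, add_mem hp₂ hz, c - e₂, ?_, ?_⟩
  · rw [map_add, ← hc, hpe₂, map_sub]
    abel
  · simpa using add_mem hp hzR

end

theorem stmt_6_general (q1 q2 n1 n2 m s1 s2 : ℕ)
    (E1 A1 : Matrix (Fin q1) (Fin n1) ℝ) (B1 : Matrix (Fin q1) (Fin m) ℝ)
    (G1 : Matrix (Fin q1) (Fin s1) ℝ)
    (E2 A2 : Matrix (Fin q2) (Fin n2) ℝ) (B2 : Matrix (Fin q2) (Fin m) ℝ)
    (G2 : Matrix (Fin q2) (Fin s2) ℝ)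
    -- the consistent subspaces V₁*, V₂*
    (V1 : Submodule ℝ (Fin n1 → ℝ)) (V2 : Submodule ℝ (Fin n2 → ℝ))
    (hV1max : ∀ V : Submodule ℝ (Fin n1 → ℝ),
      Submodule.map A1.mulVecLin V ≤ Submodule.map E1.mulVecLin V ⊔ LinearMap.range G1.mulVecLin →
      LinearMap.range B1.mulVecLin ≤ Submodule.map E1.mulVecLin V ⊔ LinearMap.range G1.mulVecLin →
      V ≤ V1)
    (hV2max : ∀ V : Submodule ℝ (Fin n2 → ℝ),
      Submodule.map A2.mulVecLin V ≤ Submodule.map E2.mulVecLin V ⊔ LinearMap.range G2.mulVecLin →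
      LinearMap.range B2.mulVecLin ≤ Submodule.map E2.mulVecLin V ⊔ LinearMap.range G2.mulVecLin →
      V ≤ V2)
    (R : Submodule ℝ ((Fin n1 → ℝ) × (Fin n2 → ℝ)))
    -- (30a)
    (ha : R ⊔ Submodule.prod
        (Submodule.comap E1.mulVecLin (LinearMap.range G1.mulVecLin) ⊓ V1) ⊥ =
      R ⊔ Submodule.prod ⊥
        (Submodule.comap E2.mulVecLin (LinearMap.range G2.mulVecLin) ⊓ V2))
    -- (30b)
    (hb : Submodule.map (LinearMap.prodMap A1.mulVecLin A2.mulVecLin) R ≤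
      Submodule.map (LinearMap.prodMap E1.mulVecLin E2.mulVecLin) R ⊔
        LinearMap.range (LinearMap.prodMap G1.mulVecLin G2.mulVecLin))
    -- (30c)
    (hc : LinearMap.range (LinearMap.prod B1.mulVecLin B2.mulVecLin) ≤
      Submodule.map (LinearMap.prodMap E1.mulVecLin E2.mulVecLin) R ⊔
        LinearMap.range (LinearMap.prodMap G1.mulVecLin G2.mulVecLin)) :
    ∀ x1 x2, (x1, x2) ∈ R → ∀ u : Fin m → ℝ, ∀ f1 ∈ V1, ∀ d1 : Fin s1 → ℝ,
      E1.mulVec f1 = A1.mulVec x1 + B1.mulVec u + G1.mulVec d1 →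
      ∃ f2 ∈ V2, ∃ d2 : Fin s2 → ℝ,
        E2.mulVec f2 = A2.mulVec x2 + B2.mulVec u + G2.mulVec d2 ∧ (f1, f2) ∈ R := by
  intro x1 x2 hx u f1 hf1 d1 hE
  have hR : IsConsistent _ _ _ _ R := ⟨hb, hc⟩
  have hRV1 := hV1max _ hR.map_fst.1 hR.map_fst.2
  have hRV2 := hV2max _ hR.map_snd.1 hR.map_snd.2
  exact exists_bisimulation_step hR hRV1 hRV2 ha hx u hf1 hE

/-- the algebraic bisimulation conditions (30a)-(30c) imply the
one-step simulation property of Proposition 3.2 (direction 1 → 2). -/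
theorem stmt_6 (q1 q2 n1 n2 m s1 s2 : ℕ)
    (E1 A1 : Matrix (Fin q1) (Fin n1) ℝ) (B1 : Matrix (Fin q1) (Fin m) ℝ)
    (G1 : Matrix (Fin q1) (Fin s1) ℝ)
    (E2 A2 : Matrix (Fin q2) (Fin n2) ℝ) (B2 : Matrix (Fin q2) (Fin m) ℝ)
    (G2 : Matrix (Fin q2) (Fin s2) ℝ)
    -- the consistent subspaces V₁*, V₂*
    (V1 : Submodule ℝ (Fin n1 → ℝ)) (V2 : Submodule ℝ (Fin n2 → ℝ))
    (hV1a : Submodule.map A1.mulVecLin V1 ≤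
      Submodule.map E1.mulVecLin V1 ⊔ LinearMap.range G1.mulVecLin)
    (hV1b : LinearMap.range B1.mulVecLin ≤
      Submodule.map E1.mulVecLin V1 ⊔ LinearMap.range G1.mulVecLin)
    (hV1max : ∀ V : Submodule ℝ (Fin n1 → ℝ),
      Submodule.map A1.mulVecLin V ≤ Submodule.map E1.mulVecLin V ⊔ LinearMap.range G1.mulVecLin →
      LinearMap.range B1.mulVecLin ≤ Submodule.map E1.mulVecLin V ⊔ LinearMap.range G1.mulVecLin →
      V ≤ V1)
    (hV2a : Submodule.map A2.mulVecLin V2 ≤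
      Submodule.map E2.mulVecLin V2 ⊔ LinearMap.range G2.mulVecLin)
    (hV2b : LinearMap.range B2.mulVecLin ≤
      Submodule.map E2.mulVecLin V2 ⊔ LinearMap.range G2.mulVecLin)
    (hV2max : ∀ V : Submodule ℝ (Fin n2 → ℝ),
      Submodule.map A2.mulVecLin V ≤ Submodule.map E2.mulVecLin V ⊔ LinearMap.range G2.mulVecLin →
      LinearMap.range B2.mulVecLin ≤ Submodule.map E2.mulVecLin V ⊔ LinearMap.range G2.mulVecLin →
      V ≤ V2)
    (R : Submodule ℝ ((Fin n1 → ℝ) × (Fin n2 → ℝ)))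
    -- (30a)
    (ha : R ⊔ Submodule.prod
        (Submodule.comap E1.mulVecLin (LinearMap.range G1.mulVecLin) ⊓ V1) ⊥ =
      R ⊔ Submodule.prod ⊥
        (Submodule.comap E2.mulVecLin (LinearMap.range G2.mulVecLin) ⊓ V2))
    -- (30b)
    (hb : Submodule.map (LinearMap.prodMap A1.mulVecLin A2.mulVecLin) R ≤
      Submodule.map (LinearMap.prodMap E1.mulVecLin E2.mulVecLin) R ⊔
        LinearMap.range (LinearMap.prodMap G1.mulVecLin G2.mulVecLin))
    -- (30c)
    (hc : LinearMap.range (LinearMap.prod B1.mulVecLin B2.mulVecLin) ≤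
      Submodule.map (LinearMap.prodMap E1.mulVecLin E2.mulVecLin) R ⊔
        LinearMap.range (LinearMap.prodMap G1.mulVecLin G2.mulVecLin)) :
    ∀ x1 x2, (x1, x2) ∈ R → ∀ u : Fin m → ℝ, ∀ f1 ∈ V1, ∀ d1 : Fin s1 → ℝ,
      E1.mulVec f1 = A1.mulVec x1 + B1.mulVec u + G1.mulVec d1 →
      ∃ f2 ∈ V2, ∃ d2 : Fin s2 → ℝ,
        E2.mulVec f2 = A2.mulVec x2 + B2.mulVec u + G2.mulVec d2 ∧ (f1, f2) ∈ R :=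
  stmt_6_general q1 q2 n1 n2 m s1 s2 E1 A1 B1 G1 E2 A2 B2 G2 V1 V2 hV1max hV2max R ha hb hc
end

section
/- Let R ⊆ X₁ × X₂ be a subspace such that for every (x₁,x₂) ∈ R, u ∈ U and f₁ ∈ V₁*, d₁ with E₁f₁ = A₁x₁ + B₁u + G₁d₁ there exist f₂ ∈ V₂*, d₂ with E₂f₂ = A₂x₂ + B₂u + G₂d₂ and (f₁,f₂) ∈ R, and symmetrically with indices 1 and 2 interchanged. Then R + (E₁⁻¹(Im G₁) ∩ V₁*) × {0} = R + {0} × (E₂⁻¹(Im G₂) ∩ V₂*). -/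
namespace Submodule

variable {K M N : Type*} [Ring K] [AddCommGroup M] [AddCommGroup N] [Module K M] [Module K N]
  {P : Submodule K (M × N)} {S : Submodule K M} {T : Submodule K N}

theorem prod_bot_le_sup_bot_prod (h : ∀ x ∈ S, ∃ y ∈ T, (x, y) ∈ P) :
    S.prod ⊥ ≤ P ⊔ (⊥ : Submodule K M).prod T := by
  rintro ⟨x, z⟩ ⟨hx, hz⟩
  obtain rfl : z = 0 := hz
  obtain ⟨y, hy, hxy⟩ := h x hx
  rw [show ((x, 0) : M × N) = (x, y) - (0, y) by simp]
  exact sub_mem (mem_sup_left hxy) (mem_sup_right ⟨zero_mem _, hy⟩)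

theorem bot_prod_le_sup_prod_bot (h : ∀ y ∈ T, ∃ x ∈ S, (x, y) ∈ P) :
    (⊥ : Submodule K M).prod T ≤ P ⊔ S.prod ⊥ := by
  rintro ⟨z, y⟩ ⟨hz, hy⟩
  obtain rfl : z = 0 := hz
  obtain ⟨x, hx, hxy⟩ := h y hy
  rw [show ((0, y) : M × N) = (x, y) - (x, 0) by simp]
  exact sub_mem (mem_sup_left hxy) (mem_sup_right ⟨hx, zero_mem _⟩)

theorem sup_prod_bot_eq_sup_bot_prod (h₁ : ∀ x ∈ S, ∃ y ∈ T, (x, y) ∈ P)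
    (h₂ : ∀ y ∈ T, ∃ x ∈ S, (x, y) ∈ P) :
    P ⊔ S.prod ⊥ = P ⊔ (⊥ : Submodule K M).prod T :=
  le_antisymm (sup_le le_sup_left (prod_bot_le_sup_bot_prod h₁))
    (sup_le le_sup_left (bot_prod_le_sup_prod_bot h₂))

end Submodule

theorem Matrix.mem_comap_range_mulVecLin_inf_iff {α l n k : Type*} [CommSemiring α] [Fintype n]
    [Fintype k] {E : Matrix l n α} {G : Matrix l k α} {V : Submodule α (n → α)} {f : n → α} :
    f ∈ Submodule.comap E.mulVecLin (LinearMap.range G.mulVecLin) ⊓ V ↔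
      f ∈ V ∧ ∃ d, E.mulVec f = G.mulVec d := by
  simp only [Submodule.mem_inf, Submodule.mem_comap, LinearMap.mem_range, Matrix.mulVecLin_apply,
    eq_comm (a := G.mulVec _)]
  exact and_comm

theorem stmt_7_general (q1 q2 n1 n2 m s1 s2 : ℕ)
    (E1 A1 : Matrix (Fin q1) (Fin n1) ℝ) (B1 : Matrix (Fin q1) (Fin m) ℝ)
    (G1 : Matrix (Fin q1) (Fin s1) ℝ)
    (E2 A2 : Matrix (Fin q2) (Fin n2) ℝ) (B2 : Matrix (Fin q2) (Fin m) ℝ)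
    (G2 : Matrix (Fin q2) (Fin s2) ℝ)
    -- the consistent subspaces V₁*, V₂*
    (V1 : Submodule ℝ (Fin n1 → ℝ)) (V2 : Submodule ℝ (Fin n2 → ℝ))
    (R : Submodule ℝ ((Fin n1 → ℝ) × (Fin n2 → ℝ)))
    (hfwd : ∀ x1 x2, (x1, x2) ∈ R → ∀ u : Fin m → ℝ, ∀ f1 ∈ V1, ∀ d1 : Fin s1 → ℝ,
      E1.mulVec f1 = A1.mulVec x1 + B1.mulVec u + G1.mulVec d1 →
      ∃ f2 ∈ V2, ∃ d2 : Fin s2 → ℝ,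
        E2.mulVec f2 = A2.mulVec x2 + B2.mulVec u + G2.mulVec d2 ∧ (f1, f2) ∈ R)
    (hbwd : ∀ x1 x2, (x1, x2) ∈ R → ∀ u : Fin m → ℝ, ∀ f2 ∈ V2, ∀ d2 : Fin s2 → ℝ,
      E2.mulVec f2 = A2.mulVec x2 + B2.mulVec u + G2.mulVec d2 →
      ∃ f1 ∈ V1, ∃ d1 : Fin s1 → ℝ,
        E1.mulVec f1 = A1.mulVec x1 + B1.mulVec u + G1.mulVec d1 ∧ (f1, f2) ∈ R) :
    R ⊔ Submodule.prod
        (Submodule.comap E1.mulVecLin (LinearMap.range G1.mulVecLin) ⊓ V1) ⊥ =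
      R ⊔ Submodule.prod ⊥
        (Submodule.comap E2.mulVecLin (LinearMap.range G2.mulVecLin) ⊓ V2) := by
  -- a disturbance-only step is a step from the origin, which is R-related to itself, with zero input
  refine Submodule.sup_prod_bot_eq_sup_bot_prod ?_ ?_
  · intro f1 hf1
    obtain ⟨hf1, d1, hd1⟩ := Matrix.mem_comap_range_mulVecLin_inf_iff.mp hf1
    obtain ⟨f2, hf2, d2, hd2, hR⟩ := hfwd 0 0 R.zero_mem 0 f1 hf1 d1 (by simpa using hd1)
    exact ⟨f2, Matrix.mem_comap_range_mulVecLin_inf_iff.mpr ⟨hf2, d2, by simpa using hd2⟩, hR⟩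
  · intro f2 hf2
    obtain ⟨hf2, d2, hd2⟩ := Matrix.mem_comap_range_mulVecLin_inf_iff.mp hf2
    obtain ⟨f1, hf1, d1, hd1, hR⟩ := hbwd 0 0 R.zero_mem 0 f2 hf2 d2 (by simpa using hd2)
    exact ⟨f1, Matrix.mem_comap_range_mulVecLin_inf_iff.mpr ⟨hf1, d1, by simpa using hd1⟩, hR⟩

/-- the one-step bisimulation property (Proposition 3.2, both
directions) implies condition (30a). -/
theorem stmt_7 (q1 q2 n1 n2 m s1 s2 : ℕ)
    (E1 A1 : Matrix (Fin q1) (Fin n1) ℝ) (B1 : Matrix (Fin q1) (Fin m) ℝ)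
    (G1 : Matrix (Fin q1) (Fin s1) ℝ)
    (E2 A2 : Matrix (Fin q2) (Fin n2) ℝ) (B2 : Matrix (Fin q2) (Fin m) ℝ)
    (G2 : Matrix (Fin q2) (Fin s2) ℝ)
    -- the consistent subspaces V₁*, V₂*
    (V1 : Submodule ℝ (Fin n1 → ℝ)) (V2 : Submodule ℝ (Fin n2 → ℝ))
    (hV1a : Submodule.map A1.mulVecLin V1 ≤
      Submodule.map E1.mulVecLin V1 ⊔ LinearMap.range G1.mulVecLin)
    (hV1b : LinearMap.range B1.mulVecLin ≤
      Submodule.map E1.mulVecLin V1 ⊔ LinearMap.range G1.mulVecLin)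
    (hV1max : ∀ V : Submodule ℝ (Fin n1 → ℝ),
      Submodule.map A1.mulVecLin V ≤ Submodule.map E1.mulVecLin V ⊔ LinearMap.range G1.mulVecLin →
      LinearMap.range B1.mulVecLin ≤ Submodule.map E1.mulVecLin V ⊔ LinearMap.range G1.mulVecLin →
      V ≤ V1)
    (hV2a : Submodule.map A2.mulVecLin V2 ≤
      Submodule.map E2.mulVecLin V2 ⊔ LinearMap.range G2.mulVecLin)
    (hV2b : LinearMap.range B2.mulVecLin ≤
      Submodule.map E2.mulVecLin V2 ⊔ LinearMap.range G2.mulVecLin)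
    (hV2max : ∀ V : Submodule ℝ (Fin n2 → ℝ),
      Submodule.map A2.mulVecLin V ≤ Submodule.map E2.mulVecLin V ⊔ LinearMap.range G2.mulVecLin →
      LinearMap.range B2.mulVecLin ≤ Submodule.map E2.mulVecLin V ⊔ LinearMap.range G2.mulVecLin →
      V ≤ V2)
    (R : Submodule ℝ ((Fin n1 → ℝ) × (Fin n2 → ℝ)))
    (hfwd : ∀ x1 x2, (x1, x2) ∈ R → ∀ u : Fin m → ℝ, ∀ f1 ∈ V1, ∀ d1 : Fin s1 → ℝ,
      E1.mulVec f1 = A1.mulVec x1 + B1.mulVec u + G1.mulVec d1 →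
      ∃ f2 ∈ V2, ∃ d2 : Fin s2 → ℝ,
        E2.mulVec f2 = A2.mulVec x2 + B2.mulVec u + G2.mulVec d2 ∧ (f1, f2) ∈ R)
    (hbwd : ∀ x1 x2, (x1, x2) ∈ R → ∀ u : Fin m → ℝ, ∀ f2 ∈ V2, ∀ d2 : Fin s2 → ℝ,
      E2.mulVec f2 = A2.mulVec x2 + B2.mulVec u + G2.mulVec d2 →
      ∃ f1 ∈ V1, ∃ d1 : Fin s1 → ℝ,
        E1.mulVec f1 = A1.mulVec x1 + B1.mulVec u + G1.mulVec d1 ∧ (f1, f2) ∈ R) :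
    R ⊔ Submodule.prod
        (Submodule.comap E1.mulVecLin (LinearMap.range G1.mulVecLin) ⊓ V1) ⊥ =
      R ⊔ Submodule.prod ⊥
        (Submodule.comap E2.mulVecLin (LinearMap.range G2.mulVecLin) ⊓ V2) :=
  stmt_7_general q1 q2 n1 n2 m s1 s2 E1 A1 B1 G1 E2 A2 B2 G2 V1 V2 R hfwd hbwd
end

section
/- Let Σ₁, Σ₂ be systems ẋᵢ = Aᵢxᵢ + Bᵢu + Gᵢdᵢ, yᵢ = Cᵢxᵢ, and let Gᵢ^⊥ be left annihilators of Gᵢ of maximal rank (ker Gᵢ^⊥ = Im Gᵢ). If a subspace R ⊆ X₁ × X₂ satisfies the bisimulation conditions (a) R + Im G₁ × {0} = R + {0} × Im G₂, (b) [A₁ 0; 0 A₂]·R ⊆ R + Im[G₁ 0; 0 G₂], (c) Im[B₁;B₂] ⊆ R + Im[G₁ 0; 0 G₂], (d) R ⊆ ker[C₁, −C₂], then R also satisfies: (a') R + (ker G₁^⊥) × {0} = R + {0} × (ker G₂^⊥), (b') [G₁^⊥A₁ 0; 0 G₂^⊥A₂]·R ⊆ [G₁^⊥ 0; 0 G₂^⊥]·R,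 (c') Im[G₁^⊥B₁; G₂^⊥B₂] ⊆ [G₁^⊥ 0; 0 G₂^⊥]·R, (d') R ⊆ ker[C₁, −C₂]; and conversely. -/
/-! The block-diagonal map `P = diag(G₁^⊥, G₂^⊥)` has kernel `Im diag(G₁, G₂)`, and for any linear
map `P` one has `P T ≤ P S ↔ T ≤ S + ker P`. Hence (b), (c) are exactly (b'), (c') (with `T` the image
of `R` under `diag(A₁, A₂)`, resp. the range of `[B₁; B₂]`), while (a) and (d) coincide with (a') and
(d') once `ker Gᵢ^⊥` is rewritten as `Im Gᵢ`. -/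

namespace Matrix

variable {R l₁ l₂ m₁ m₂ n₁ n₂ k : Type*} [CommSemiring R]
  [Fintype m₁] [Fintype m₂] [Fintype n₁] [Fintype n₂] [Fintype k]

theorem mulVecLin_mul_prodMap (P : Matrix l₁ m₁ R) (Q : Matrix l₂ m₂ R)
    (A : Matrix m₁ n₁ R) (B : Matrix m₂ n₂ R) :
    (P * A).mulVecLin.prodMap (Q * B).mulVecLin =
      P.mulVecLin.prodMap Q.mulVecLin ∘ₗ A.mulVecLin.prodMap B.mulVecLin := by
  rw [mulVecLin_mul, mulVecLin_mul, LinearMap.prodMap_comp]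

theorem mulVecLin_mul_prod (P : Matrix l₁ m₁ R) (Q : Matrix l₂ m₂ R)
    (A : Matrix m₁ k R) (B : Matrix m₂ k R) :
    (P * A).mulVecLin.prod (Q * B).mulVecLin =
      P.mulVecLin.prodMap Q.mulVecLin ∘ₗ A.mulVecLin.prod B.mulVecLin := by
  rw [mulVecLin_mul, mulVecLin_mul]
  rfl

end Matrix

/-- `R` is a bisimulation relation between the ODE systems with
disturbances (conditions (37)) iff it is one between the disturbance-eliminated
DAE systems `Gᵢ^⊥ẋᵢ = Gᵢ^⊥Aᵢxᵢ + Gᵢ^⊥Bᵢu` (conditions (49)). -/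
theorem stmt_9 (n1 n2 m s1 s2 p r1 r2 : ℕ)
    (A1 : Matrix (Fin n1) (Fin n1) ℝ) (B1 : Matrix (Fin n1) (Fin m) ℝ)
    (G1 : Matrix (Fin n1) (Fin s1) ℝ) (C1 : Matrix (Fin p) (Fin n1) ℝ)
    (A2 : Matrix (Fin n2) (Fin n2) ℝ) (B2 : Matrix (Fin n2) (Fin m) ℝ)
    (G2 : Matrix (Fin n2) (Fin s2) ℝ) (C2 : Matrix (Fin p) (Fin n2) ℝ)
    (G1perp : Matrix (Fin r1) (Fin n1) ℝ) (G2perp : Matrix (Fin r2) (Fin n2) ℝ)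
    (hG1 : LinearMap.ker G1perp.mulVecLin = LinearMap.range G1.mulVecLin)
    (hG2 : LinearMap.ker G2perp.mulVecLin = LinearMap.range G2.mulVecLin)
    (R : Submodule ℝ ((Fin n1 → ℝ) × (Fin n2 → ℝ))) :
    -- conditions (37) for the ODE systems with disturbances
    ((R ⊔ Submodule.prod (LinearMap.range G1.mulVecLin) ⊥ =
        R ⊔ Submodule.prod ⊥ (LinearMap.range G2.mulVecLin)) ∧
     (Submodule.map (LinearMap.prodMap A1.mulVecLin A2.mulVecLin) R ≤
        R ⊔ LinearMap.range (LinearMap.prodMap G1.mulVecLin G2.mulVecLin)) ∧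
     (LinearMap.range (LinearMap.prod B1.mulVecLin B2.mulVecLin) ≤
        R ⊔ LinearMap.range (LinearMap.prodMap G1.mulVecLin G2.mulVecLin)) ∧
     (R ≤ LinearMap.ker (LinearMap.coprod C1.mulVecLin (-C2.mulVecLin)))) ↔
    -- conditions (49) for the disturbance-eliminated DAE systems
    ((R ⊔ Submodule.prod (LinearMap.ker G1perp.mulVecLin) ⊥ =
        R ⊔ Submodule.prod ⊥ (LinearMap.ker G2perp.mulVecLin)) ∧
     (Submodule.map (LinearMap.prodMap (G1perp * A1).mulVecLin (G2perp * A2).mulVecLin) R ≤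
        Submodule.map (LinearMap.prodMap G1perp.mulVecLin G2perp.mulVecLin) R) ∧
     (LinearMap.range (LinearMap.prod (G1perp * B1).mulVecLin (G2perp * B2).mulVecLin) ≤
        Submodule.map (LinearMap.prodMap G1perp.mulVecLin G2perp.mulVecLin) R) ∧
     (R ≤ LinearMap.ker (LinearMap.coprod C1.mulVecLin (-C2.mulVecLin)))) := by
  set P := LinearMap.prodMap G1perp.mulVecLin G2perp.mulVecLin
  have hker : LinearMap.ker P = LinearMap.range (LinearMap.prodMap G1.mulVecLin G2.mulVecLin) := by
    rw [LinearMap.ker_prodMap, LinearMap.range_prodMap, hG1, hG2]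
  rw [hG1, hG2, Matrix.mulVecLin_mul_prodMap, Matrix.mulVecLin_mul_prod, LinearMap.range_comp,
    Submodule.map_comp, ← hker, LinearMap.map_le_map_iff, LinearMap.map_le_map_iff]
end

section
/- Let E₁, A₁ ∈ ℝ^{n₁×n₁} and E₂, A₂ ∈ ℝ^{n₂×n₂} with E₁, E₂ invertible, and let B₁, B₂, C₁, C₂ be real matrices of compatible sizes. Suppose C₁(sE₁ − A₁)⁻¹B₁ = C₂(sE₂ − A₂)⁻¹B₂ as rational matrix functions. Then the subspace R := span of the columns of the block matrices [ (E₁⁻¹A₁)^k E₁⁻¹B₁ ; (E₂⁻¹A₂)^k E₂⁻¹B₂ ] for k = 0, 1, 2, … satisfies: (a) [A₁ 0; 0 A₂]·R ⊆ [E₁ 0; 0 E₂]·R, (b) Im[B₁; B₂] ⊆ [E₁ 0; 0 E₂]·R, (c) R ⊆ ker[C₁, −C₂]. -/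
/-
At the place at infinity of `K(X)` the resolvent `(X • 1 - M)⁻¹` of a constant matrix is small:
it is the fixed point of `Y = X⁻¹ • (1 + M * Y)`, and if its largest entry had valuation `≥ 1`
the right-hand side would be smaller by the factor `v(X⁻¹) < 1`. Consequently, in
`C (X • 1 - M)⁻¹ B = X⁻¹ • (C B + C M (X • 1 - M)⁻¹ B)` the constant `C B` is the only part of
`X • (transfer function)` that is not small, so equal transfer functions have equal `C B` and
equal transfer functions with `C` replaced by `C M`; by induction all Markov parameters
`Cᵢ (Eᵢ⁻¹Aᵢ)ᵏ Eᵢ⁻¹Bᵢ` agree. The bisimulation conditions then hold generator by generator: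
`E (E⁻¹A)ᵏ⁺¹ E⁻¹B = A (E⁻¹A)ᵏ E⁻¹B`, `E E⁻¹B = B`, and `[C₁, -C₂]` kills each generator.
-/

open Matrix

namespace Matrix

variable {L Γ₀ : Type*} [Field L] [LinearOrderedCommGroupWithZero Γ₀] (v : Valuation L Γ₀)
  {l m n : Type*} [Fintype l] [Fintype m] [Fintype n]

def supValuation (X : Matrix m n L) : Γ₀ :=
  Finset.univ.sup fun p : m × n => v (X p.1 p.2)

variable {v}

theorem supValuation_le_iff {X : Matrix m n L} {a : Γ₀} :
    supValuation v X ≤ a ↔ ∀ i j, v (X i j) ≤ a := by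
  simp [supValuation, Finset.sup_le_iff, Prod.forall]

theorem valuation_le_supValuation (X : Matrix m n L) (i : m) (j : n) :
    v (X i j) ≤ supValuation v X :=
  supValuation_le_iff.mp le_rfl i j

theorem supValuation_add_le (X Y : Matrix m n L) :
    supValuation v (X + Y) ≤ max (supValuation v X) (supValuation v Y) :=
  supValuation_le_iff.mpr fun i j => (v.map_add _ _).trans <|
    max_le_max (valuation_le_supValuation X i j) (valuation_le_supValuation Y i j)

theorem supValuation_smul_le (t : L) (X : Matrix m n L) :
    supValuation v (t • X) ≤ v t * supValuation v X :=
  supValuation_le_iff.mpr fun i j => by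
    rw [smul_apply, smul_eq_mul, v.map_mul]
    exact mul_le_mul_right (valuation_le_supValuation X i j) _

theorem supValuation_mul_le (X : Matrix l m L) (Y : Matrix m n L) :
    supValuation v (X * Y) ≤ supValuation v X * supValuation v Y :=
  supValuation_le_iff.mpr fun i j => v.map_sum_le fun k _ => by
    rw [v.map_mul]
    exact mul_le_mul' (valuation_le_supValuation X i k) (valuation_le_supValuation Y k j)

theorem supValuation_one_le [DecidableEq n] : supValuation v (1 : Matrix n n L) ≤ 1 :=
  supValuation_le_iff.mpr fun i j => by
    rcases eq_or_ne i j with rfl | h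
    · simp
    · simp [one_apply_ne h]

theorem supValuation_map_algebraMap_le_one {K : Type*} [Field K] [Algebra K L] [v.IsTrivialOn K]
    (M : Matrix m n K) : supValuation v (M.map (algebraMap K L)) ≤ 1 :=
  supValuation_le_iff.mpr fun i j => Valuation.IsTrivialOn.valuation_algebraMap_le_one v (M i j)

theorem supValuation_lt_one_of_eq_smul [DecidableEq n] {t : L} {M Y : Matrix n n L}
    (ht : v t < 1) (hM : supValuation v M ≤ 1) (hY : Y = t • (1 + M * Y)) :
    supValuation v Y < 1 := by
  by_contra! h
  have hbound : supValuation v Y ≤ v t * supValuation v Y := calc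
    supValuation v Y ≤ v t * supValuation v (1 + M * Y) := by
      conv_lhs => rw [hY]
      exact supValuation_smul_le _ _
    _ ≤ v t * supValuation v Y := by
      refine mul_le_mul_right ((supValuation_add_le _ _).trans (max_le ?_ ?_)) _
      · exact supValuation_one_le.trans h
      · exact (supValuation_mul_le _ _).trans (mul_le_of_le_one_left' hM)
  exact hbound.not_gt (mul_lt_of_lt_one_left (zero_lt_one.trans_le h) ht)

theorem eq_and_eq_of_map_add_eq_map_add {K : Type*} [Field K] [Algebra K L] [v.IsTrivialOn K]
    {a b : Matrix m n K} {F G : Matrix m n L} (hF : supValuation v F < 1)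
    (hG : supValuation v G < 1) (h : a.map (algebraMap K L) + F = b.map (algebraMap K L) + G) :
    a = b ∧ F = G := by
  have hab : a = b := by
    ext i j
    by_contra hne
    have hdiff : algebraMap K L (a i j - b i j) = G i j - F i j := by
      have := congrFun (congrFun h i) j
      simp only [add_apply, map_apply] at this
      rw [map_sub]
      linear_combination this
    have hlt : v (G i j - F i j) < 1 := (v.map_sub _ _).trans_lt <| max_lt
      ((valuation_le_supValuation G i j).trans_lt hG) ((valuation_le_supValuation F i j).trans_lt hF)
    rw [← hdiff, Valuation.IsTrivialOn.eq_one _ (sub_ne_zero.mpr hne)] at hlt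
    exact hlt.false
  subst hab
  exact ⟨rfl, add_left_cancel h⟩

end Matrix

open RatFunc
open scoped Polynomial

section Transfer

variable {K : Type*} [Field K] {m n p : Type*} [Fintype n] [DecidableEq n]

local notation:max "↑ₘ" M:max => Matrix.map M (algebraMap K (RatFunc K))
local notation:max "𝓡" M:max => ((X : RatFunc K) • 1 - ↑ₘM)⁻¹

theorem det_X_smul_one_sub_map_ne_zero (M : Matrix n n K) :
    ((X : RatFunc K) • 1 - ↑ₘM).det ≠ 0 := by
  have hchar : (X : RatFunc K) • 1 - ↑ₘM = (charmatrix M).map (algebraMap K[X] (RatFunc K)) := by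
    ext i j
    rcases eq_or_ne i j with rfl | h
    · simp [charmatrix_apply_eq, RatFunc.algebraMap_C]
    · simp [charmatrix_apply_ne _ _ _ h, one_apply_ne h, RatFunc.algebraMap_C]
  rw [hchar, ← RingHom.mapMatrix_apply, ← RingHom.map_det]
  exact (map_ne_zero_iff _ (RatFunc.algebraMap_injective K)).mpr M.charpoly_monic.ne_zero

theorem resolvent_eq_X_inv_smul (M : Matrix n n K) :
    𝓡 M = (X : RatFunc K)⁻¹ • (1 + ↑ₘM * 𝓡 M) := by
  have hunit : IsUnit ((X : RatFunc K) • 1 - ↑ₘM).det := (det_X_smul_one_sub_map_ne_zero M).isUnit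
  have h := mul_nonsing_inv _ hunit
  rw [sub_mul, smul_mul, one_mul, sub_eq_iff_eq_add] at h
  rw [← h, smul_smul, inv_mul_cancel₀ X_ne_zero, one_smul]

theorem supValuation_resolvent_lt_one [DecidableEq (RatFunc K)] (M : Matrix n n K) :
    supValuation (inftyValuation K) (𝓡 M) < 1 := by
  refine supValuation_lt_one_of_eq_smul ?_ (supValuation_map_algebraMap_le_one M)
    (resolvent_eq_X_inv_smul M)
  rw [map_inv₀, inftyValuation.X, ← WithZero.exp_neg]
  exact WithZero.exp_lt_exp.mpr (by norm_num)

theorem transfer_eq_X_inv_smul (M : Matrix n n K) (C : Matrix p n K) (B : Matrix n m K) :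
    ↑ₘC * 𝓡 M * ↑ₘB = (X : RatFunc K)⁻¹ • (↑ₘ(C * B) + ↑ₘ(C * M) * 𝓡 M * ↑ₘB) := by
  conv_lhs => rw [resolvent_eq_X_inv_smul M]
  simp only [Matrix.mul_smul, Matrix.smul_mul, Matrix.mul_add, Matrix.add_mul, Matrix.mul_one,
    Matrix.map_mul, Matrix.mul_assoc]

theorem supValuation_transfer_lt_one [DecidableEq (RatFunc K)] [Fintype m] [Fintype p]
    (M : Matrix n n K) (C : Matrix p n K) (B : Matrix n m K) :
    supValuation (inftyValuation K) (↑ₘC * 𝓡 M * ↑ₘB) < 1 := calc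
  _ ≤ supValuation (inftyValuation K) ↑ₘC *
        supValuation (inftyValuation K) (𝓡 M) *
        supValuation (inftyValuation K) ↑ₘB :=
    (supValuation_mul_le _ _).trans (mul_le_mul_left (supValuation_mul_le _ _) _)
  _ ≤ 1 * supValuation (inftyValuation K) (𝓡 M) * 1 := by
    gcongr <;> exact supValuation_map_algebraMap_le_one _
  _ < 1 := by simpa using supValuation_resolvent_lt_one M

theorem transfer_descriptor_eq {E : Matrix n n K} (hE : IsUnit E.det) (A : Matrix n n K)
    (C : Matrix p n K) (B : Matrix n m K) :
    ↑ₘC * ((X : RatFunc K) • ↑ₘE - ↑ₘA)⁻¹ * ↑ₘB = ↑ₘC * 𝓡 (E⁻¹ * A) * ↑ₘ(E⁻¹ * B) := by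
  have hfactor : (X : RatFunc K) • ↑ₘE - ↑ₘA = ↑ₘE * ((X : RatFunc K) • 1 - ↑ₘ(E⁻¹ * A)) := by
    rw [Matrix.mul_sub, Matrix.mul_smul, Matrix.mul_one, ← Matrix.map_mul, ← Matrix.mul_assoc,
      mul_nonsing_inv _ hE, Matrix.one_mul]
  have hinv : (↑ₘE)⁻¹ = ↑ₘE⁻¹ := by
    refine inv_eq_left_inv ?_
    rw [← Matrix.map_mul, nonsing_inv_mul _ hE, Matrix.map_one _ (map_zero _) (map_one _)]
  rw [hfactor, Matrix.mul_inv_rev, hinv]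
  simp only [Matrix.map_mul, Matrix.mul_assoc]

variable {n' : Type*} [Fintype n'] [DecidableEq n'] [Fintype m] [Fintype p]

theorem mul_eq_and_transfer_mul_eq_of_transfer_eq {M : Matrix n n K} {C : Matrix p n K}
    {B : Matrix n m K} {M' : Matrix n' n' K} {C' : Matrix p n' K} {B' : Matrix n' m K}
    (h : ↑ₘC * 𝓡 M * ↑ₘB = ↑ₘC' * 𝓡 M' * ↑ₘB') :
    C * B = C' * B' ∧ ↑ₘ(C * M) * 𝓡 M * ↑ₘB = ↑ₘ(C' * M') * 𝓡 M' * ↑ₘB' := by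
  classical
  rw [transfer_eq_X_inv_smul M C B, transfer_eq_X_inv_smul M' C' B'] at h
  exact eq_and_eq_of_map_add_eq_map_add (v := inftyValuation K)
    (supValuation_transfer_lt_one _ _ _) (supValuation_transfer_lt_one _ _ _)
    (smul_right_injective _ (inv_ne_zero X_ne_zero) h)

theorem mul_pow_mul_eq_of_transfer_eq {M : Matrix n n K} {C : Matrix p n K}
    {B : Matrix n m K} {M' : Matrix n' n' K} {C' : Matrix p n' K} {B' : Matrix n' m K}
    (h : ↑ₘC * 𝓡 M * ↑ₘB = ↑ₘC' * 𝓡 M' * ↑ₘB') (k : ℕ) : C * M ^ k * B = C' * M' ^ k * B' := by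
  induction k generalizing C C' with
  | zero => simpa using (mul_eq_and_transfer_mul_eq_of_transfer_eq h).1
  | succ k ih =>
    simpa only [pow_succ', Matrix.mul_assoc] using
      ih (mul_eq_and_transfer_mul_eq_of_transfer_eq h).2

end Transfer

section Subspace

variable {R : Type*} [CommRing R]

theorem map_prodMap_range_prod_mulVecLin {l m n o p : Type*} [Fintype m] [Fintype o] [Fintype p]
    (F : Matrix l m R) (F' : Matrix n o R) (N : Matrix m p R) (N' : Matrix o p R) :
    Submodule.map (LinearMap.prodMap F.mulVecLin F'.mulVecLin)
        (LinearMap.range (LinearMap.prod N.mulVecLin N'.mulVecLin)) =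
      LinearMap.range (LinearMap.prod (F * N).mulVecLin (F' * N').mulVecLin) := by
  rw [← LinearMap.range_comp]
  congr 1
  ext x <;> simp [mulVec_mulVec]

theorem mul_mul_inv_mul_pow_succ_mul {m n : Type*} [Fintype n] [DecidableEq n]
    {E : Matrix n n R} (hE : IsUnit E.det) (A : Matrix n n R) (N : Matrix n m R) (k : ℕ) :
    E * ((E⁻¹ * A) ^ (k + 1) * N) = A * ((E⁻¹ * A) ^ k * N) := by
  rw [pow_succ', Matrix.mul_assoc, ← Matrix.mul_assoc E, ← Matrix.mul_assoc E,
    mul_nonsing_inv _ hE, Matrix.one_mul]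

theorem range_prod_mulVecLin_le_ker_coprod {l m n o : Type*} [Fintype m] [Fintype n] [Fintype o]
    {C : Matrix l m R} {C' : Matrix l n R} {N : Matrix m o R} {N' : Matrix n o R} (h : C * N = C' * N') :
    LinearMap.range (LinearMap.prod N.mulVecLin N'.mulVecLin) ≤
      LinearMap.ker (LinearMap.coprod C.mulVecLin (-C'.mulVecLin)) := by
  rintro _ ⟨x, rfl⟩
  simp [mulVec_mulVec, h]

end Subspace

/-- if `E₁, E₂` are invertible and the transfer matrices
`Cᵢ(sEᵢ - Aᵢ)⁻¹Bᵢ` (as matrices of rational functions) are equal, then the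
subspace spanned by the columns of `[(Eᵢ⁻¹Aᵢ)^k Eᵢ⁻¹Bᵢ]ᵢ`, `k ≥ 0`, satisfies
the bisimulation conditions (51a)-(51c). -/
theorem stmt_10 (n1 n2 m p : ℕ)
    (E1 A1 : Matrix (Fin n1) (Fin n1) ℝ) (B1 : Matrix (Fin n1) (Fin m) ℝ)
    (C1 : Matrix (Fin p) (Fin n1) ℝ)
    (E2 A2 : Matrix (Fin n2) (Fin n2) ℝ) (B2 : Matrix (Fin n2) (Fin m) ℝ)
    (C2 : Matrix (Fin p) (Fin n2) ℝ)
    (hE1 : IsUnit E1.det) (hE2 : IsUnit E2.det)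
    (htransfer :
      C1.map (algebraMap ℝ (RatFunc ℝ)) *
        ((RatFunc.X : RatFunc ℝ) • E1.map (algebraMap ℝ (RatFunc ℝ)) - A1.map (algebraMap ℝ (RatFunc ℝ)))⁻¹ *
        B1.map (algebraMap ℝ (RatFunc ℝ)) =
      C2.map (algebraMap ℝ (RatFunc ℝ)) *
        ((RatFunc.X : RatFunc ℝ) • E2.map (algebraMap ℝ (RatFunc ℝ)) - A2.map (algebraMap ℝ (RatFunc ℝ)))⁻¹ *
        B2.map (algebraMap ℝ (RatFunc ℝ)))
    (R : Submodule ℝ ((Fin n1 → ℝ) × (Fin n2 → ℝ)))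
    (hR : R = ⨆ k : ℕ, LinearMap.range (LinearMap.prod
      ((E1⁻¹ * A1) ^ k * (E1⁻¹ * B1)).mulVecLin
      ((E2⁻¹ * A2) ^ k * (E2⁻¹ * B2)).mulVecLin)) :
    (Submodule.map (LinearMap.prodMap A1.mulVecLin A2.mulVecLin) R ≤
       Submodule.map (LinearMap.prodMap E1.mulVecLin E2.mulVecLin) R) ∧
    (LinearMap.range (LinearMap.prod B1.mulVecLin B2.mulVecLin) ≤
       Submodule.map (LinearMap.prodMap E1.mulVecLin E2.mulVecLin) R) ∧
    (R ≤ LinearMap.ker (LinearMap.coprod C1.mulVecLin (-C2.mulVecLin))) := by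
  have hmarkov : ∀ k : ℕ, C1 * ((E1⁻¹ * A1) ^ k * (E1⁻¹ * B1)) =
      C2 * ((E2⁻¹ * A2) ^ k * (E2⁻¹ * B2)) := by
    rw [transfer_descriptor_eq hE1, transfer_descriptor_eq hE2] at htransfer
    intro k
    simpa only [Matrix.mul_assoc] using mul_pow_mul_eq_of_transfer_eq htransfer k
  subst hR
  refine ⟨?_, ?_, iSup_le fun k => range_prod_mulVecLin_le_ker_coprod (hmarkov k)⟩
  · rw [Submodule.map_iSup, Submodule.map_iSup]
    refine iSup_le fun k => le_iSup_of_le (k + 1) (le_of_eq ?_)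
    rw [map_prodMap_range_prod_mulVecLin, map_prodMap_range_prod_mulVecLin,
      mul_mul_inv_mul_pow_succ_mul hE1, mul_mul_inv_mul_pow_succ_mul hE2]
  · rw [Submodule.map_iSup]
    refine le_iSup_of_le 0 (le_of_eq ?_)
    rw [map_prodMap_range_prod_mulVecLin]
    simp only [pow_zero, Matrix.one_mul, mul_nonsing_inv_cancel_left _ _ hE1,
      mul_nonsing_inv_cancel_left _ _ hE2]
end

section
/- Let S ⊆ X₁ × X₂ be a simulation relation of Σ₁ by Σ₂ (satisfying conditions (59a)–(59d)) and T ⊆ X₂ × X₁ a simulation relation of Σ₂ by Σ₁ (satisfying (59a)–(59d) with indices 1 and 2 interchanged). Then R := S + T⁻¹, where T⁻¹ := {(x₁,x₂) : (x₂,x₁) ∈ T}, satisfies the bisimulation conditions (30a)–(30d): (a) R + (E₁⁻¹(Im G₁)∩V₁*)×{0} = R + {0}×(E₂⁻¹(Im G₂)∩V₂*), (b) [A₁ 0;0 A₂]·R ⊆ [E₁ 0;0 E₂]·R + Im[G₁ 0;0 G₂], (c) Im[B₁;B₂] ⊆ [E₁ 0;0 E₂]·R + Im[G₁ 0;0 G₂],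 (d) R ⊆ ker[C₁,−C₂]. -/
/-!
Conditions (b)–(d) are stable under sums of subspaces and are carried over by the coordinate
swap `(x₂, x₁) ↦ (x₁, x₂)`, so `R = S + T⁻¹` inherits them from `S` and from `T⁻¹`; condition
(c) even holds already for `S ⊆ R`. For (a), the inclusion for `S` gives one half of the
equality and the swapped inclusion for `T` gives the other.
-/

open Submodule LinearMap

theorem sup_sup_eq_sup_sup_of_le {α : Type*} [SemilatticeSup α] {s t p q : α}
    (hs : s ⊔ p ≤ s ⊔ q) (ht : t ⊔ q ≤ t ⊔ p) : s ⊔ t ⊔ p = s ⊔ t ⊔ q := by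
  apply le_antisymm <;> refine sup_le le_sup_left ?_
  · calc p ≤ s ⊔ q := le_sup_right.trans hs
      _ ≤ s ⊔ t ⊔ q := sup_le_sup_right le_sup_left q
  · calc q ≤ t ⊔ p := le_sup_right.trans ht
      _ ≤ s ⊔ t ⊔ p := sup_le_sup_right le_sup_right p

section

variable {R M M₁ M₂ N₁ N₂ : Type*} [Semiring R] [AddCommMonoid M] [AddCommMonoid M₁]
  [AddCommMonoid M₂] [AddCommMonoid N₁] [AddCommMonoid N₂] [Module R M] [Module R M₁]
  [Module R M₂] [Module R N₁] [Module R N₂]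

theorem Submodule.map_sup_le_of_le {f g : M →ₗ[R] M₁} {S T : Submodule R M}
    {W : Submodule R M₁} (hS : S.map f ≤ S.map g ⊔ W) (hT : T.map f ≤ T.map g ⊔ W) :
    (S ⊔ T).map f ≤ (S ⊔ T).map g ⊔ W := by
  rw [map_sup]
  refine sup_le (hS.trans ?_) (hT.trans ?_) <;> gcongr
  exacts [le_sup_left, le_sup_right]

theorem Submodule.map_prodComm_prod (p : Submodule R M₁) (q : Submodule R M₂) :
    (p.prod q).map (LinearEquiv.prodComm R M₁ M₂).toLinearMap = q.prod p := by
  ext ⟨x, y⟩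
  simp [map_equiv_eq_comap_symm, and_comm]

theorem LinearMap.prodMap_comp_prodComm (f : M₁ →ₗ[R] N₁) (g : M₂ →ₗ[R] N₂) :
    f.prodMap g ∘ₗ (LinearEquiv.prodComm R M₂ M₁).toLinearMap =
      (LinearEquiv.prodComm R N₂ N₁).toLinearMap ∘ₗ g.prodMap f :=
  rfl

theorem Submodule.map_prodMap_map_prodComm (f : M₁ →ₗ[R] N₁) (g : M₂ →ₗ[R] N₂)
    (T : Submodule R (M₂ × M₁)) :
    (T.map (LinearEquiv.prodComm R M₂ M₁).toLinearMap).map (f.prodMap g) =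
      (T.map (g.prodMap f)).map (LinearEquiv.prodComm R N₂ N₁).toLinearMap := by
  rw [← map_comp, prodMap_comp_prodComm, map_comp]

theorem LinearMap.range_prodMap_eq_map_prodComm (f : M₁ →ₗ[R] N₁) (g : M₂ →ₗ[R] N₂) :
    range (f.prodMap g) =
      (range (g.prodMap f)).map (LinearEquiv.prodComm R N₂ N₁).toLinearMap := by
  rw [range_eq_map, range_eq_map, ← map_prodMap_map_prodComm,
    Submodule.map_top (LinearEquiv.prodComm R M₂ M₁).toLinearMap, LinearEquiv.range]

theorem Submodule.map_prodComm_sup_bot_prod_le {T : Submodule R (M₂ × M₁)}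
    {P₁ : Submodule R M₁} {P₂ : Submodule R M₂}
    (h : T ⊔ P₂.prod ⊥ ≤ T ⊔ (⊥ : Submodule R M₂).prod P₁) :
    T.map (LinearEquiv.prodComm R M₂ M₁).toLinearMap ⊔ (⊥ : Submodule R M₁).prod P₂ ≤
      T.map (LinearEquiv.prodComm R M₂ M₁).toLinearMap ⊔ P₁.prod ⊥ := by
  simpa only [map_sup, map_prodComm_prod] using
    map_mono (f := (LinearEquiv.prodComm R M₂ M₁).toLinearMap) h

theorem Submodule.map_prodComm_map_prodMap_le {K₁ K₂ : Type*} [AddCommMonoid K₁]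
    [AddCommMonoid K₂] [Module R K₁] [Module R K₂] {a₁ e₁ : M₁ →ₗ[R] N₁} {a₂ e₂ : M₂ →ₗ[R] N₂}
    {g₁ : K₁ →ₗ[R] N₁} {g₂ : K₂ →ₗ[R] N₂} {T : Submodule R (M₂ × M₁)}
    (h : T.map (a₂.prodMap a₁) ≤ T.map (e₂.prodMap e₁) ⊔ range (g₂.prodMap g₁)) :
    (T.map (LinearEquiv.prodComm R M₂ M₁).toLinearMap).map (a₁.prodMap a₂) ≤
      (T.map (LinearEquiv.prodComm R M₂ M₁).toLinearMap).map (e₁.prodMap e₂) ⊔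
        range (g₁.prodMap g₂) := by
  rw [map_prodMap_map_prodComm, map_prodMap_map_prodComm, range_prodMap_eq_map_prodComm,
    ← map_sup]
  exact map_mono h

end

theorem Submodule.map_prodComm_le_ker_coprod_neg {R M₁ M₂ N : Type*} [Ring R]
    [AddCommGroup M₁] [AddCommGroup M₂] [AddCommGroup N] [Module R M₁] [Module R M₂] [Module R N]
    {f : M₁ →ₗ[R] N} {g : M₂ →ₗ[R] N} {T : Submodule R (M₂ × M₁)}
    (h : T ≤ ker (g.coprod (-f))) :
    T.map (LinearEquiv.prodComm R M₂ M₁).toLinearMap ≤ ker (f.coprod (-g)) := by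
  rintro _ ⟨⟨x₂, x₁⟩, hx, rfl⟩
  have hx' : g x₂ = f x₁ := by simpa [← sub_eq_add_neg, sub_eq_zero] using h hx
  simp [hx']

theorem stmt_12_general (q1 q2 n1 n2 m s1 s2 p : ℕ)
    (E1 A1 : Matrix (Fin q1) (Fin n1) ℝ) (B1 : Matrix (Fin q1) (Fin m) ℝ)
    (G1 : Matrix (Fin q1) (Fin s1) ℝ) (C1 : Matrix (Fin p) (Fin n1) ℝ)
    (E2 A2 : Matrix (Fin q2) (Fin n2) ℝ) (B2 : Matrix (Fin q2) (Fin m) ℝ)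
    (G2 : Matrix (Fin q2) (Fin s2) ℝ) (C2 : Matrix (Fin p) (Fin n2) ℝ)
    (V1 : Submodule ℝ (Fin n1 → ℝ)) (V2 : Submodule ℝ (Fin n2 → ℝ))
    (S : Submodule ℝ ((Fin n1 → ℝ) × (Fin n2 → ℝ)))
    (T : Submodule ℝ ((Fin n2 → ℝ) × (Fin n1 → ℝ)))
    -- conditions (59) for S (simulation of Σ₁ by Σ₂)
    (hSa : S ⊔ Submodule.prod
        (Submodule.comap E1.mulVecLin (LinearMap.range G1.mulVecLin) ⊓ V1) ⊥ ≤
      S ⊔ Submodule.prod ⊥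
        (Submodule.comap E2.mulVecLin (LinearMap.range G2.mulVecLin) ⊓ V2))
    (hSb : Submodule.map (LinearMap.prodMap A1.mulVecLin A2.mulVecLin) S ≤
      Submodule.map (LinearMap.prodMap E1.mulVecLin E2.mulVecLin) S ⊔
        LinearMap.range (LinearMap.prodMap G1.mulVecLin G2.mulVecLin))
    (hSc : LinearMap.range (LinearMap.prod B1.mulVecLin B2.mulVecLin) ≤
      Submodule.map (LinearMap.prodMap E1.mulVecLin E2.mulVecLin) S ⊔
        LinearMap.range (LinearMap.prodMap G1.mulVecLin G2.mulVecLin))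
    (hSd : S ≤ LinearMap.ker (LinearMap.coprod C1.mulVecLin (-C2.mulVecLin)))
    -- conditions (59) for T (simulation of Σ₂ by Σ₁, indices interchanged)
    (hTa : T ⊔ Submodule.prod
        (Submodule.comap E2.mulVecLin (LinearMap.range G2.mulVecLin) ⊓ V2) ⊥ ≤
      T ⊔ Submodule.prod ⊥
        (Submodule.comap E1.mulVecLin (LinearMap.range G1.mulVecLin) ⊓ V1))
    (hTb : Submodule.map (LinearMap.prodMap A2.mulVecLin A1.mulVecLin) T ≤
      Submodule.map (LinearMap.prodMap E2.mulVecLin E1.mulVecLin) T ⊔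
        LinearMap.range (LinearMap.prodMap G2.mulVecLin G1.mulVecLin))
    (hTd : T ≤ LinearMap.ker (LinearMap.coprod C2.mulVecLin (-C1.mulVecLin)))
    (R : Submodule ℝ ((Fin n1 → ℝ) × (Fin n2 → ℝ)))
    (hR : R = S ⊔ Submodule.map
      (LinearEquiv.prodComm ℝ (Fin n2 → ℝ) (Fin n1 → ℝ) : _ →ₗ[ℝ] _) T) :
    (R ⊔ Submodule.prod
        (Submodule.comap E1.mulVecLin (LinearMap.range G1.mulVecLin) ⊓ V1) ⊥ =
      R ⊔ Submodule.prod ⊥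
        (Submodule.comap E2.mulVecLin (LinearMap.range G2.mulVecLin) ⊓ V2)) ∧
    (Submodule.map (LinearMap.prodMap A1.mulVecLin A2.mulVecLin) R ≤
      Submodule.map (LinearMap.prodMap E1.mulVecLin E2.mulVecLin) R ⊔
        LinearMap.range (LinearMap.prodMap G1.mulVecLin G2.mulVecLin)) ∧
    (LinearMap.range (LinearMap.prod B1.mulVecLin B2.mulVecLin) ≤
      Submodule.map (LinearMap.prodMap E1.mulVecLin E2.mulVecLin) R ⊔
        LinearMap.range (LinearMap.prodMap G1.mulVecLin G2.mulVecLin)) ∧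
    (R ≤ LinearMap.ker (LinearMap.coprod C1.mulVecLin (-C2.mulVecLin))) := by
  subst hR
  refine ⟨sup_sup_eq_sup_sup_of_le hSa (map_prodComm_sup_bot_prod_le hTa),
    map_sup_le_of_le hSb (map_prodComm_map_prodMap_le hTb), ?_,
    sup_le hSd (map_prodComm_le_ker_coprod_neg hTd)⟩
  exact hSc.trans (sup_le_sup_right (map_mono le_sup_left) _)

/-- if `S` is a simulation relation of `Σ₁` by `Σ₂` and `T` a
simulation relation of `Σ₂` by `Σ₁`, then `R := S + T⁻¹` satisfies the
bisimulation conditions (30a)-(30d). -/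
theorem stmt_12 (q1 q2 n1 n2 m s1 s2 p : ℕ)
    (E1 A1 : Matrix (Fin q1) (Fin n1) ℝ) (B1 : Matrix (Fin q1) (Fin m) ℝ)
    (G1 : Matrix (Fin q1) (Fin s1) ℝ) (C1 : Matrix (Fin p) (Fin n1) ℝ)
    (E2 A2 : Matrix (Fin q2) (Fin n2) ℝ) (B2 : Matrix (Fin q2) (Fin m) ℝ)
    (G2 : Matrix (Fin q2) (Fin s2) ℝ) (C2 : Matrix (Fin p) (Fin n2) ℝ)
    (V1 : Submodule ℝ (Fin n1 → ℝ)) (V2 : Submodule ℝ (Fin n2 → ℝ))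
    (S : Submodule ℝ ((Fin n1 → ℝ) × (Fin n2 → ℝ)))
    (T : Submodule ℝ ((Fin n2 → ℝ) × (Fin n1 → ℝ)))
    -- conditions (59) for S (simulation of Σ₁ by Σ₂)
    (hSa : S ⊔ Submodule.prod
        (Submodule.comap E1.mulVecLin (LinearMap.range G1.mulVecLin) ⊓ V1) ⊥ ≤
      S ⊔ Submodule.prod ⊥
        (Submodule.comap E2.mulVecLin (LinearMap.range G2.mulVecLin) ⊓ V2))
    (hSb : Submodule.map (LinearMap.prodMap A1.mulVecLin A2.mulVecLin) S ≤
      Submodule.map (LinearMap.prodMap E1.mulVecLin E2.mulVecLin) S ⊔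
        LinearMap.range (LinearMap.prodMap G1.mulVecLin G2.mulVecLin))
    (hSc : LinearMap.range (LinearMap.prod B1.mulVecLin B2.mulVecLin) ≤
      Submodule.map (LinearMap.prodMap E1.mulVecLin E2.mulVecLin) S ⊔
        LinearMap.range (LinearMap.prodMap G1.mulVecLin G2.mulVecLin))
    (hSd : S ≤ LinearMap.ker (LinearMap.coprod C1.mulVecLin (-C2.mulVecLin)))
    -- conditions (59) for T (simulation of Σ₂ by Σ₁, indices interchanged)
    (hTa : T ⊔ Submodule.prod
        (Submodule.comap E2.mulVecLin (LinearMap.range G2.mulVecLin) ⊓ V2) ⊥ ≤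
      T ⊔ Submodule.prod ⊥
        (Submodule.comap E1.mulVecLin (LinearMap.range G1.mulVecLin) ⊓ V1))
    (hTb : Submodule.map (LinearMap.prodMap A2.mulVecLin A1.mulVecLin) T ≤
      Submodule.map (LinearMap.prodMap E2.mulVecLin E1.mulVecLin) T ⊔
        LinearMap.range (LinearMap.prodMap G2.mulVecLin G1.mulVecLin))
    (hTc : LinearMap.range (LinearMap.prod B2.mulVecLin B1.mulVecLin) ≤
      Submodule.map (LinearMap.prodMap E2.mulVecLin E1.mulVecLin) T ⊔
        LinearMap.range (LinearMap.prodMap G2.mulVecLin G1.mulVecLin))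
    (hTd : T ≤ LinearMap.ker (LinearMap.coprod C2.mulVecLin (-C1.mulVecLin)))
    (R : Submodule ℝ ((Fin n1 → ℝ) × (Fin n2 → ℝ)))
    (hR : R = S ⊔ Submodule.map
      (LinearEquiv.prodComm ℝ (Fin n2 → ℝ) (Fin n1 → ℝ) : _ →ₗ[ℝ] _) T) :
    (R ⊔ Submodule.prod
        (Submodule.comap E1.mulVecLin (LinearMap.range G1.mulVecLin) ⊓ V1) ⊥ =
      R ⊔ Submodule.prod ⊥
        (Submodule.comap E2.mulVecLin (LinearMap.range G2.mulVecLin) ⊓ V2)) ∧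
    (Submodule.map (LinearMap.prodMap A1.mulVecLin A2.mulVecLin) R ≤
      Submodule.map (LinearMap.prodMap E1.mulVecLin E2.mulVecLin) R ⊔
        LinearMap.range (LinearMap.prodMap G1.mulVecLin G2.mulVecLin)) ∧
    (LinearMap.range (LinearMap.prod B1.mulVecLin B2.mulVecLin) ≤
      Submodule.map (LinearMap.prodMap E1.mulVecLin E2.mulVecLin) R ⊔
        LinearMap.range (LinearMap.prodMap G1.mulVecLin G2.mulVecLin)) ∧
    (R ≤ LinearMap.ker (LinearMap.coprod C1.mulVecLin (-C2.mulVecLin))) :=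
  stmt_12_general q1 q2 n1 n2 m s1 s2 p E1 A1 B1 G1 C1 E2 A2 B2 G2 C2 V1 V2 S T hSa hSb hSc hSd hTa
    hTb hTd R hR
end

section
/- Let R* be the limit of Algorithm 3.4 (so R* = R^{k} = R^{k+1} for some k). If R* is nonempty it is the maximal subspace of X₁ × X₂ satisfying (i) R* + 𝒢₁^× = R* + 𝒢₂^×, (ii) A^×·R* ⊆ E^×·R* + Im Ḡ^×, (iii) R* ⊆ ker C^×; i.e., every subspace R satisfying (i)–(iii) is contained in R*. -/
/-! Induction on `j` shows `W ≤ Rʲ` for every `j`: once `W ≤ Rʲ`, the invariance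
`A W ⊆ E W + Im Ḡ` of `W` itself gives `A W ⊆ E Rʲ + Im Ḡ`, so the maximality of each
step of the algorithm puts `W` inside `Rʲ⁺¹`. -/

theorem Submodule.map_le_map_sup_of_le {R M N : Type*} [Semiring R] [AddCommMonoid M]
    [AddCommMonoid N] [Module R M] [Module R N] {f g : M →ₗ[R] N} {W V : Submodule R M}
    {T : Submodule R N} (hW : W.map f ≤ W.map g ⊔ T) (hWV : W ≤ V) :
    W.map f ≤ V.map g ⊔ T :=
  hW.trans (sup_le_sup_right (Submodule.map_mono hWV) T)

theorem stmt_16_general (q1 q2 n1 n2 s1 s2 : ℕ)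
    (E1 A1 : Matrix (Fin q1) (Fin n1) ℝ) (G1 : Matrix (Fin q1) (Fin s1) ℝ)
    (E2 A2 : Matrix (Fin q2) (Fin n2) ℝ) (G2 : Matrix (Fin q2) (Fin s2) ℝ)
    (G1x G2x : Submodule ℝ ((Fin n1 → ℝ) × (Fin n2 → ℝ)))
    (kerCx : Submodule ℝ ((Fin n1 → ℝ) × (Fin n2 → ℝ)))
    -- the sequence Rʲ of Algorithm 3.4
    (R : ℕ → Submodule ℝ ((Fin n1 → ℝ) × (Fin n2 → ℝ)))
    (h0 : R 0 = ⊤)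
    (hmax : ∀ j : ℕ, ∀ W : Submodule ℝ ((Fin n1 → ℝ) × (Fin n2 → ℝ)),
      W ≤ R j → (j = 0 → W ≤ kerCx) →
      (1 ≤ j → ∀ z ∈ W,
        LinearMap.prodMap A1.mulVecLin A2.mulVecLin z ∈
          Submodule.map (LinearMap.prodMap E1.mulVecLin E2.mulVecLin) (R j) ⊔
            LinearMap.range (LinearMap.prodMap G1.mulVecLin G2.mulVecLin)) →
      (W ⊔ G1x = W ⊔ G2x) → W ≤ R (j + 1))
    (k : ℕ) :
    ∀ W : Submodule ℝ ((Fin n1 → ℝ) × (Fin n2 → ℝ)),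
      (W ⊔ G1x = W ⊔ G2x) →
      (Submodule.map (LinearMap.prodMap A1.mulVecLin A2.mulVecLin) W ≤
        Submodule.map (LinearMap.prodMap E1.mulVecLin E2.mulVecLin) W ⊔
          LinearMap.range (LinearMap.prodMap G1.mulVecLin G2.mulVecLin)) →
      W ≤ kerCx → W ≤ R k := by
  intro W hWG hWA hWC
  have hWR : ∀ j, W ≤ R j := by
    intro j
    induction j with
    | zero => exact h0 ▸ le_top
    | succ j ih =>
      refine hmax j W ih (fun _ => hWC) (fun _ z hz => ?_) hWG
      exact Submodule.map_le_map_sup_of_le hWA ih (Submodule.mem_map_of_mem hz)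
  exact hWR k

/-- the limit `R* = R^k = R^{k+1}` of Algorithm 3.4 is the maximal
subspace satisfying conditions (40i)-(40iii): every subspace `W` satisfying them
is contained in `R*`. -/
theorem stmt_16 (q1 q2 n1 n2 m s1 s2 p : ℕ)
    (E1 A1 : Matrix (Fin q1) (Fin n1) ℝ) (G1 : Matrix (Fin q1) (Fin s1) ℝ)
    (C1 : Matrix (Fin p) (Fin n1) ℝ)
    (E2 A2 : Matrix (Fin q2) (Fin n2) ℝ) (G2 : Matrix (Fin q2) (Fin s2) ℝ)
    (C2 : Matrix (Fin p) (Fin n2) ℝ)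
    (V1 : Submodule ℝ (Fin n1 → ℝ)) (V2 : Submodule ℝ (Fin n2 → ℝ))
    (G1x G2x : Submodule ℝ ((Fin n1 → ℝ) × (Fin n2 → ℝ)))
    (hG1x : G1x = Submodule.prod
      (Submodule.comap E1.mulVecLin (LinearMap.range G1.mulVecLin) ⊓ V1) ⊥)
    (hG2x : G2x = Submodule.prod ⊥
      (Submodule.comap E2.mulVecLin (LinearMap.range G2.mulVecLin) ⊓ V2))
    (kerCx : Submodule ℝ ((Fin n1 → ℝ) × (Fin n2 → ℝ)))
    (hkerCx : kerCx = LinearMap.ker (LinearMap.coprod C1.mulVecLin (-C2.mulVecLin)))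
    -- the sequence Rʲ of Algorithm 3.4
    (R : ℕ → Submodule ℝ ((Fin n1 → ℝ) × (Fin n2 → ℝ)))
    (h0 : R 0 = ⊤)
    (hsub : ∀ j : ℕ, R (j + 1) ≤ R j)
    (hC : R 1 ≤ kerCx)
    (hA : ∀ j : ℕ, 1 ≤ j → ∀ z ∈ R (j + 1),
      LinearMap.prodMap A1.mulVecLin A2.mulVecLin z ∈
        Submodule.map (LinearMap.prodMap E1.mulVecLin E2.mulVecLin) (R j) ⊔
          LinearMap.range (LinearMap.prodMap G1.mulVecLin G2.mulVecLin))
    (hG : ∀ j : ℕ, R (j + 1) ⊔ G1x = R (j + 1) ⊔ G2x)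
    (hmax : ∀ j : ℕ, ∀ W : Submodule ℝ ((Fin n1 → ℝ) × (Fin n2 → ℝ)),
      W ≤ R j → (j = 0 → W ≤ kerCx) →
      (1 ≤ j → ∀ z ∈ W,
        LinearMap.prodMap A1.mulVecLin A2.mulVecLin z ∈
          Submodule.map (LinearMap.prodMap E1.mulVecLin E2.mulVecLin) (R j) ⊔
            LinearMap.range (LinearMap.prodMap G1.mulVecLin G2.mulVecLin)) →
      (W ⊔ G1x = W ⊔ G2x) → W ≤ R (j + 1))
    -- the algorithm has stabilized at step k
    (k : ℕ) (hk : R (k + 1) = R k) :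
    ∀ W : Submodule ℝ ((Fin n1 → ℝ) × (Fin n2 → ℝ)),
      (W ⊔ G1x = W ⊔ G2x) →
      (Submodule.map (LinearMap.prodMap A1.mulVecLin A2.mulVecLin) W ≤
        Submodule.map (LinearMap.prodMap E1.mulVecLin E2.mulVecLin) W ⊔
          LinearMap.range (LinearMap.prodMap G1.mulVecLin G2.mulVecLin)) →
      W ≤ kerCx → W ≤ R k :=
  stmt_16_general q1 q2 n1 n2 s1 s2 E1 A1 G1 E2 A2 G2 G1x G2x kerCx R h0 hmax k
end

section
/- There exist regular DAE systems Σ₁, Σ₂ with equal transfer matrices but no bisimulation relation between them. Concretely: Σ₁ with E₁ = [[1,0],[0,0]], A₁ = I₂, B₁ = [0;1], C₁ = [1,1] and Σ₂ with E₂ = [[0,0],[0,1]], A₂ = I₂, B₂ = [1;0], C₂ = [1,1] satisfy C₁(sE₁−A₁)⁻¹B₁ = C₂(sE₂−A₂)⁻¹B₂ = −1 as rational functions, yet the consistent subsets of both systems are empty; i.e., there is no subspace V ⊆ ℝ² with A₁·V ⊆ E₁·V and Im B₁ ⊆ E₁·V (and similarly for Σ₂). -/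
/-! In both systems the input enters along `ker E`: `E B = 0` and `A = 1`, so `(sE - A) B = -B` and
the transfer function is `-C B = -1`. But `Im B` meets `Im E` only in `0`, so it cannot lie in any
`E V`, and no subspace is consistent. Both pencils are regular since at `s = 0` they reduce
to `-1`. -/

section

open Matrix Polynomial

-- Evaluating the pencil at `s = 0` leaves `-A`.
theorem det_pencil_ne_zero {n R : Type*} [Fintype n] [DecidableEq n] [CommRing R]
    (E A : Matrix n n R) (hA : A.det ≠ 0) :
    ((X : R[X]) • E.map C - A.map C).det ≠ 0 := by
  intro h
  have hmap : (evalRingHom (0 : R)).mapMatrix ((X : R[X]) • E.map C - A.map C) = -A := by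
    ext i j; simp
  have := congrArg (evalRingHom (0 : R)) h
  rw [RingHom.map_det, hmap, det_neg, map_zero] at this
  exact hA ((isUnit_neg_one.pow _).mul_right_eq_zero.mp this)

theorem pencil_map_algebraMap {n K : Type*} [Field K] (E A : Matrix n n K) :
    ((X : K[X]) • E.map C - A.map C).map (algebraMap K[X] (RatFunc K)) =
      (RatFunc.X : RatFunc K) • E.map (algebraMap K (RatFunc K)) -
        A.map (algebraMap K (RatFunc K)) := by
  ext i j
  simp only [map_apply, Matrix.sub_apply, Matrix.smul_apply, smul_eq_mul, map_sub, map_mul,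
    RatFunc.algebraMap_C, RatFunc.algebraMap_X, RatFunc.algebraMap_eq_C]

theorem det_pencil_ratFunc_ne_zero {n K : Type*} [Fintype n] [DecidableEq n] [Field K]
    (E A : Matrix n n K)
    (h : ((X : K[X]) • E.map C - A.map C).det ≠ 0) :
    ((RatFunc.X : RatFunc K) • E.map (algebraMap K (RatFunc K)) -
        A.map (algebraMap K (RatFunc K))).det ≠ 0 := by
  rw [← pencil_map_algebraMap, ← RingHom.mapMatrix_apply, ← RingHom.map_det]
  exact (map_ne_zero_iff _ (RatFunc.algebraMap_injective K)).mpr h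

theorem mul_pencil_inv_mul_eq_neg {n m p F : Type*} [Fintype n] [DecidableEq n] [Field F]
    (s : F) (E A : Matrix n n F) (B : Matrix n m F) (C : Matrix p n F)
    (hdet : (s • E - A).det ≠ 0) (hEB : E * B = 0) (hAB : A * B = B) :
    C * (s • E - A)⁻¹ * B = -(C * B) := by
  have hpencil : (s • E - A) * -B = B := by
    rw [Matrix.mul_neg, Matrix.sub_mul, Matrix.smul_mul, hEB, hAB, smul_zero, zero_sub, neg_neg]
  have hinv : (s • E - A)⁻¹ * B = -B := by
    conv_lhs => rw [← hpencil]
    exact nonsing_inv_mul_cancel_left _ _ hdet.isUnit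
  rw [Matrix.mul_assoc, hinv, Matrix.mul_neg]

theorem not_range_mulVecLin_le_of_row_eq_zero {n m R : Type*} [Fintype n] [Fintype m]
    [DecidableEq m] [CommRing R] {E : Matrix n n R} {B : Matrix n m R} {i : n} {k : m}
    (hE : ∀ j, E i j = 0) (hB : B i k ≠ 0) :
    ¬ LinearMap.range B.mulVecLin ≤ LinearMap.range E.mulVecLin := by
  intro h
  obtain ⟨v, hv⟩ := h (LinearMap.mem_range_self _ (Pi.single k 1))
  have hEv : (E *ᵥ v) i = 0 := by simp [mulVec, dotProduct, hE]
  apply hB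
  simpa [mulVec_single_one, hEv] using (congrFun hv i).symm

def IsConsistentSubspace {R M U : Type*} [Semiring R] [AddCommMonoid M] [Module R M]
    [AddCommMonoid U] [Module R U] (E A : M →ₗ[R] M) (B : U →ₗ[R] M) (V : Submodule R M) :
    Prop :=
  V.map A ≤ V.map E ∧ LinearMap.range B ≤ V.map E

theorem not_isConsistentSubspace_of_not_range_le {R M U : Type*} [Semiring R]
    [AddCommMonoid M] [Module R M] [AddCommMonoid U] [Module R U]
    {E A : M →ₗ[R] M} {B : U →ₗ[R] M}
    (h : ¬ LinearMap.range B ≤ LinearMap.range E) (V : Submodule R M) :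
    ¬ IsConsistentSubspace E A B V :=
  fun hV => h (hV.2.trans LinearMap.map_le_range)

theorem transfer_ratFunc_eq_neg {n m p K : Type*} [Fintype n] [DecidableEq n] [Field K]
    (E A : Matrix n n K) (B : Matrix n m K) (C : Matrix p n K)
    (hreg : ((X : K[X]) • E.map Polynomial.C - A.map Polynomial.C).det ≠ 0)
    (hEB : E * B = 0) (hAB : A * B = B) :
    C.map (algebraMap K (RatFunc K)) *
        ((RatFunc.X : RatFunc K) • E.map (algebraMap K (RatFunc K)) -
          A.map (algebraMap K (RatFunc K)))⁻¹ * B.map (algebraMap K (RatFunc K)) =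
      -(C * B).map (algebraMap K (RatFunc K)) := by
  rw [mul_pencil_inv_mul_eq_neg _ _ _ _ _ (det_pencil_ratFunc_ne_zero E A hreg), ← Matrix.map_mul]
  · rw [← Matrix.map_mul, hEB, Matrix.map_zero _ (map_zero _)]
  · rw [← Matrix.map_mul, hAB]

end

/-- Example 4.6: the two concrete regular DAE systems are regular
and have equal transfer matrices, yet their consistent subsets are empty
(no subspace satisfies the consistency conditions), so no bisimulation relation
exists. -/
theorem stmt_17 :
    -- Σ₁ is regular
    ((Polynomial.X : Polynomial ℝ) •
        (!![1, 0; 0, 0] : Matrix (Fin 2) (Fin 2) ℝ).map Polynomial.C -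
        (1 : Matrix (Fin 2) (Fin 2) ℝ).map Polynomial.C).det ≠ 0 ∧
    -- Σ₂ is regular
    ((Polynomial.X : Polynomial ℝ) •
        (!![0, 0; 0, 1] : Matrix (Fin 2) (Fin 2) ℝ).map Polynomial.C -
        (1 : Matrix (Fin 2) (Fin 2) ℝ).map Polynomial.C).det ≠ 0 ∧
    -- the transfer matrices are equal (both equal to -1)
    ((!![1, 1] : Matrix (Fin 1) (Fin 2) ℝ).map (algebraMap ℝ (RatFunc ℝ)) *
        ((RatFunc.X : RatFunc ℝ) •
            (!![1, 0; 0, 0] : Matrix (Fin 2) (Fin 2) ℝ).map (algebraMap ℝ (RatFunc ℝ)) -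
          (1 : Matrix (Fin 2) (Fin 2) ℝ).map (algebraMap ℝ (RatFunc ℝ)))⁻¹ *
        (!![0; 1] : Matrix (Fin 2) (Fin 1) ℝ).map (algebraMap ℝ (RatFunc ℝ)) =
      (!![1, 1] : Matrix (Fin 1) (Fin 2) ℝ).map (algebraMap ℝ (RatFunc ℝ)) *
        ((RatFunc.X : RatFunc ℝ) •
            (!![0, 0; 0, 1] : Matrix (Fin 2) (Fin 2) ℝ).map (algebraMap ℝ (RatFunc ℝ)) -
          (1 : Matrix (Fin 2) (Fin 2) ℝ).map (algebraMap ℝ (RatFunc ℝ)))⁻¹ *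
        (!![1; 0] : Matrix (Fin 2) (Fin 1) ℝ).map (algebraMap ℝ (RatFunc ℝ)) ∧
      (!![1, 1] : Matrix (Fin 1) (Fin 2) ℝ).map (algebraMap ℝ (RatFunc ℝ)) *
        ((RatFunc.X : RatFunc ℝ) •
            (!![1, 0; 0, 0] : Matrix (Fin 2) (Fin 2) ℝ).map (algebraMap ℝ (RatFunc ℝ)) -
          (1 : Matrix (Fin 2) (Fin 2) ℝ).map (algebraMap ℝ (RatFunc ℝ)))⁻¹ *
        (!![0; 1] : Matrix (Fin 2) (Fin 1) ℝ).map (algebraMap ℝ (RatFunc ℝ)) =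
      !![-1]) ∧
    -- the consistent subset of Σ₁ is empty
    (¬ ∃ V : Submodule ℝ (Fin 2 → ℝ),
      Submodule.map (1 : Matrix (Fin 2) (Fin 2) ℝ).mulVecLin V ≤
        Submodule.map (!![1, 0; 0, 0] : Matrix (Fin 2) (Fin 2) ℝ).mulVecLin V ∧
      LinearMap.range (!![0; 1] : Matrix (Fin 2) (Fin 1) ℝ).mulVecLin ≤
        Submodule.map (!![1, 0; 0, 0] : Matrix (Fin 2) (Fin 2) ℝ).mulVecLin V) ∧
    -- the consistent subset of Σ₂ is empty
    (¬ ∃ V : Submodule ℝ (Fin 2 → ℝ),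
      Submodule.map (1 : Matrix (Fin 2) (Fin 2) ℝ).mulVecLin V ≤
        Submodule.map (!![0, 0; 0, 1] : Matrix (Fin 2) (Fin 2) ℝ).mulVecLin V ∧
      LinearMap.range (!![1; 0] : Matrix (Fin 2) (Fin 1) ℝ).mulVecLin ≤
        Submodule.map (!![0, 0; 0, 1] : Matrix (Fin 2) (Fin 2) ℝ).mulVecLin V) := by
  have hA : (1 : Matrix (Fin 2) (Fin 2) ℝ).det ≠ 0 := by simp
  have regular₁ := det_pencil_ne_zero !![(1 : ℝ), 0; 0, 0] 1 hA
  have regular₂ := det_pencil_ne_zero !![(0 : ℝ), 0; 0, 1] 1 hA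
  have transfer₁ := transfer_ratFunc_eq_neg _ _ !![(0 : ℝ); 1] !![(1 : ℝ), 1] regular₁
    (by ext i j; fin_cases i <;> fin_cases j <;> simp) (Matrix.one_mul _)
  have transfer₂ := transfer_ratFunc_eq_neg _ _ !![(1 : ℝ); 0] !![(1 : ℝ), 1] regular₂
    (by ext i j; fin_cases i <;> fin_cases j <;> simp) (Matrix.one_mul _)
  have transfer_eq₁ := transfer₁.trans
    (show _ = !![(-1 : RatFunc ℝ)] by ext i j; fin_cases i; fin_cases j; simp)
  have transfer_eq₂ := transfer₂.trans
    (show _ = !![(-1 : RatFunc ℝ)] by ext i j; fin_cases i; fin_cases j; simp)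
  refine ⟨regular₁, regular₂, ⟨transfer_eq₁.trans transfer_eq₂.symm, transfer_eq₁⟩,
    ?_, ?_⟩
  · exact fun ⟨V, hV⟩ => not_isConsistentSubspace_of_not_range_le
      (not_range_mulVecLin_le_of_row_eq_zero (i := 1) (k := 0)
        (by simp [Fin.forall_fin_two]) (by simp)) V hV
  · exact fun ⟨V, hV⟩ => not_isConsistentSubspace_of_not_range_le
      (not_range_mulVecLin_le_of_row_eq_zero (i := 0) (k := 0)
        (by simp [Fin.forall_fin_two]) (by simp)) V hV
end
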